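/- arXiv:alg-geom/9512012 — 9 statements merged into one kernel-verified Lean document; each statement's English description precedes it below -/
import Mathlib

section
/- Let H be a numerical semigroup of genus g ≥ 1 whose smallest positive element m₁ satisfies m₁ ≥ 3. Then the i-th smallest positive element mᵢ of H satisfies mᵢ ≥ 2i+1 for i = 1,...,g−2, m_{g−1} ≥ 2g−2, and m_g = 2g. -/
/-!
Write `N(n)` for the number of gaps below `n`. For a gap `m`, reflection `x ↦ m - x` maps the
elements of `S` in `[0, m]` injectively to gaps in `[0, m]`, so `m ≤ 2 N(m) + 1`; in case of
equality it is onto, i.e. `m - k ∈ S` for every gap `k ≤ m`. Walking down from a gap, the bound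
`n ≤ 2 N(n) + 1` holds below every gap. Hence all gaps are `< 2g`, which gives `m_g = 2g`.
As `a ≤ m_i ↔ a ≤ N(a) + i`, the remaining bounds ask for enough gaps below `2i + 1` and
`2g - 2`. Otherwise counting forces equality at the gap `2i + 1` (resp. `2g - 1`). In `2g - 1`
the gap `2g - 2` reflects to `1`. In `2i + 1` the gap `1` reflects to `2i`; then either `2i + 2`
is a gap, which makes `S ∩ [0, 2i + 1]` an initial segment, or `2i + 3` is a gap with equality,
in which the gap `2` reflects to `2i + 1`.
-/

/-- A numerical semigroup: a cofinite subsemigroup of ℕ containing 0. -/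
def IsNumSgp (S : Set ℕ) : Prop :=
  0 ∈ S ∧ (∀ a ∈ S, ∀ b ∈ S, a + b ∈ S) ∧ (Sᶜ).Finite

/-- The genus: number of gaps. -/
noncomputable def genus (S : Set ℕ) : ℕ := Sᶜ.ncard

/-- The j-th smallest positive element (non-gap) of `S`, 1-indexed. -/
noncomputable def nongap (S : Set ℕ) (j : ℕ) : ℕ :=
  Nat.nth (fun n => n ∈ S ∧ 0 < n) (j - 1)

/-- The i-th smallest gap of `S`, 1-indexed. -/
noncomputable def gapNth (S : Set ℕ) (i : ℕ) : ℕ :=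
  Nat.nth (fun n => n ∉ S) (i - 1)

/-- The weight of the semigroup. -/
noncomputable def weight (S : Set ℕ) : ℕ :=
  ∑ i ∈ Finset.Icc 1 (genus S), (gapNth S i - i)

/-- The number of even gaps of `S`. -/
noncomputable def evenGaps (S : Set ℕ) : ℕ := {n | n ∉ S ∧ Even n}.ncard

/-- `S` is γ-hyperelliptic: exactly γ even elements in [2,4γ], and the
(γ+1)-th positive element is 4γ+2. -/
noncomputable def GammaHyper (S : Set ℕ) (γ : ℕ) : Prop :=
  {n ∈ S | Even n ∧ 2 ≤ n ∧ n ≤ 4 * γ}.ncard = γ ∧ nongap S (γ + 1) = 4 * γ + 2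

section

variable {S : Set ℕ}

lemma nongap_one_le {k : ℕ} (hk : k ∈ S) (hk0 : 0 < k) : nongap S 1 ≤ k := by
  rw [nongap, Nat.sub_self, Nat.nth_zero]
  exact Nat.sInf_le ⟨hk, hk0⟩

lemma infinite_setOf_mem_and_pos (hfin : Sᶜ.Finite) : {n | n ∈ S ∧ 0 < n}.Infinite := by
  have hS : S.Infinite := by simpa using hfin.infinite_compl
  exact (hS.sdiff (Set.finite_singleton 0)).mono fun n hn => ⟨hn.1, Nat.pos_of_ne_zero hn.2⟩

lemma sub_notMem_of_mem (hadd : ∀ a ∈ S, ∀ b ∈ S, a + b ∈ S) {m x : ℕ} (hm : m ∉ S)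
    (hx : x ∈ S) (hxm : x ≤ m) : m - x ∉ S :=
  fun h => hm (by simpa [Nat.add_sub_cancel' hxm] using hadd x hx _ h)

end

section GapCounting

variable {S : Set ℕ} [DecidablePred (· ∈ S)]

variable (S) in
def gapsBelow (n : ℕ) : ℕ := Nat.count (· ∉ S) n

lemma gapsBelow_succ_of_mem {n : ℕ} (h : n ∈ S) : gapsBelow S (n + 1) = gapsBelow S n := by
  simp [gapsBelow, Nat.count_succ, h]

lemma gapsBelow_succ_of_notMem {n : ℕ} (h : n ∉ S) :
    gapsBelow S (n + 1) = gapsBelow S n + 1 := by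
  simp [gapsBelow, Nat.count_succ, h]

lemma gapsBelow_succ_le (n : ℕ) : gapsBelow S (n + 1) ≤ gapsBelow S n + 1 := by
  by_cases h : n ∈ S
  · rw [gapsBelow_succ_of_mem h]; omega
  · rw [gapsBelow_succ_of_notMem h]

lemma count_mem_add_gapsBelow (n : ℕ) : Nat.count (· ∈ S) n + gapsBelow S n = n := by
  induction n with
  | zero => simp [gapsBelow]
  | succ n ih =>
    by_cases h : n ∈ S
    · rw [gapsBelow_succ_of_mem h, Nat.count_succ, if_pos h]; omega
    · rw [gapsBelow_succ_of_notMem h, Nat.count_succ, if_neg h]; omega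

lemma gapsBelow_le_genus (hfin : Sᶜ.Finite) (n : ℕ) : gapsBelow S n ≤ genus S := by
  rw [gapsBelow, Nat.count_eq_card_filter_range, genus, Set.ncard_eq_toFinset_card _ hfin]
  exact Finset.card_le_card fun x hx => by simpa using (Finset.mem_filter.mp hx).2

lemma gapsBelow_eq_genus (hfin : Sᶜ.Finite) {n : ℕ} (h : ∀ m ∉ S, m < n) :
    gapsBelow S n = genus S := by
  rw [gapsBelow, Nat.count_eq_card_filter_range, genus, Set.ncard_eq_toFinset_card _ hfin]
  congr 1
  ext x
  simpa using fun hx => h x hx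

lemma exists_notMem_ge_of_gapsBelow_lt_genus (hfin : Sᶜ.Finite) {n : ℕ}
    (h : gapsBelow S n < genus S) : ∃ m, n ≤ m ∧ m ∉ S := by
  by_contra! hall
  exact h.ne (gapsBelow_eq_genus hfin fun m hm => by_contra fun hmn => hm (hall m (not_lt.mp hmn)))

lemma count_mem_le_gapsBelow (hadd : ∀ a ∈ S, ∀ b ∈ S, a + b ∈ S) {m : ℕ} (hm : m ∉ S) :
    Nat.count (· ∈ S) (m + 1) ≤ gapsBelow S (m + 1) := by
  rw [gapsBelow, Nat.count_eq_card_filter_range, Nat.count_eq_card_filter_range]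
  refine Finset.card_le_card_of_injOn (m - ·) (fun x hx => ?_) (fun x hx y hy hxy => ?_)
  · simp only [Finset.coe_filter, Finset.mem_range, Set.mem_ofPred_eq] at hx ⊢
    exact ⟨by omega, sub_notMem_of_mem hadd hm hx.2 (by omega)⟩
  · simp only [Finset.coe_filter, Finset.mem_range, Set.mem_ofPred_eq] at hx hy hxy
    omega

lemma count_mem_lt_gapsBelow (hadd : ∀ a ∈ S, ∀ b ∈ S, a + b ∈ S) {m k : ℕ} (hm : m ∉ S)
    (hkm : k ≤ m) (hk : k ∉ S) (hmk : m - k ∉ S) :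
    Nat.count (· ∈ S) (m + 1) < gapsBelow S (m + 1) := by
  rw [gapsBelow, Nat.count_eq_card_filter_range, Nat.count_eq_card_filter_range]
  have hkG : k ∈ (Finset.range (m + 1)).filter (· ∉ S) :=
    Finset.mem_filter.mpr ⟨Finset.mem_range.mpr (by omega), hk⟩
  rw [← Finset.card_erase_add_one hkG, Nat.lt_add_one_iff]
  refine Finset.card_le_card_of_injOn (m - ·) (fun x hx => ?_) (fun x hx y hy hxy => ?_)
  · simp only [Finset.coe_filter, Finset.mem_range, Set.mem_ofPred_eq, Finset.coe_erase,
      Set.mem_sdiff, Set.mem_singleton_iff] at hx ⊢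
    refine ⟨⟨by omega, sub_notMem_of_mem hadd hm hx.2 (by omega)⟩, fun hxk => hmk ?_⟩
    rw [← hxk, Nat.sub_sub_self (by omega)]
    exact hx.2
  · simp only [Finset.coe_filter, Finset.mem_range, Set.mem_ofPred_eq] at hx hy hxy
    omega

lemma le_two_mul_gapsBelow_add_one_of_notMem (hadd : ∀ a ∈ S, ∀ b ∈ S, a + b ∈ S) {m : ℕ}
    (hm : m ∉ S) : m ≤ 2 * gapsBelow S m + 1 := by
  have hle := count_mem_le_gapsBelow hadd hm
  have hsum := count_mem_add_gapsBelow (S := S) (m + 1)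
  rw [gapsBelow_succ_of_notMem hm] at hle hsum
  omega

lemma le_two_mul_gapsBelow_add_one (hadd : ∀ a ∈ S, ∀ b ∈ S, a + b ∈ S) {m n : ℕ}
    (hm : m ∉ S) (hnm : n ≤ m) : n ≤ 2 * gapsBelow S n + 1 := by
  obtain ⟨d, rfl⟩ := Nat.exists_eq_add_of_le hnm
  induction d generalizing n with
  | zero => exact le_two_mul_gapsBelow_add_one_of_notMem hadd hm
  | succ d ih =>
    by_cases hn : n ∈ S
    · have := ih (n := n + 1) (by rwa [Nat.add_right_comm, Nat.add_assoc]) (by omega)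
      rw [gapsBelow_succ_of_mem hn] at this
      omega
    · exact le_two_mul_gapsBelow_add_one_of_notMem hadd hn

lemma notMem_of_eq_two_mul_gapsBelow_add_one (hadd : ∀ a ∈ S, ∀ b ∈ S, a + b ∈ S) {m n : ℕ}
    (hn : n = 2 * gapsBelow S n + 1) (hm : m ∉ S) (hnm : n ≤ m) : n ∉ S := by
  intro hnS
  have := le_two_mul_gapsBelow_add_one hadd hm
    (lt_of_le_of_ne hnm fun h => hm (h ▸ hnS) : n + 1 ≤ m)
  rw [gapsBelow_succ_of_mem hnS] at this
  omega

lemma sub_mem_of_eq_two_mul_gapsBelow_add_one (hadd : ∀ a ∈ S, ∀ b ∈ S, a + b ∈ S)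
    {m k : ℕ} (hm : m ∉ S) (hsym : m = 2 * gapsBelow S m + 1) (hkm : k ≤ m) (hk : k ∉ S) :
    m - k ∈ S := by
  by_contra hmk
  have hlt := count_mem_lt_gapsBelow hadd hm hkm hk hmk
  have hsum := count_mem_add_gapsBelow (S := S) (m + 1)
  rw [gapsBelow_succ_of_notMem hm] at hlt hsum
  omega

lemma mem_of_le_of_mem_of_add_one_notMem (hadd : ∀ a ∈ S, ∀ b ∈ S, a + b ∈ S) {m x y : ℕ}
    (hm : m ∉ S) (hsym : m = 2 * gapsBelow S m + 1) (hm1 : m + 1 ∉ S) (hx : x ∈ S)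
    (hxm : x ≤ m) (hyx : y ≤ x) : y ∈ S := by
  induction x with
  | zero => rwa [Nat.le_zero.mp hyx]
  | succ x ih =>
    rcases Nat.lt_or_ge y (x + 1) with hy | hy
    · -- `m - x` is a gap since `(x + 1) + (m - x) = m + 1`, and its reflection in `m` is `x`.
      have hx' : x ∈ S := by
        have := sub_mem_of_eq_two_mul_gapsBelow_add_one hadd hm hsym (k := m - x) (by omega)
          (by simpa [Nat.add_sub_add_right] using sub_notMem_of_mem hadd hm1 hx (by omega))
        rwa [Nat.sub_sub_self (by omega)] at this
      exact ih hx' (by omega) (by omega)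
    · rwa [le_antisymm hyx hy]

lemma lt_two_mul_genus_of_notMem (hadd : ∀ a ∈ S, ∀ b ∈ S, a + b ∈ S) (hfin : Sᶜ.Finite)
    {m : ℕ} (hm : m ∉ S) : m < 2 * genus S := by
  have hle := le_two_mul_gapsBelow_add_one_of_notMem hadd hm
  have hgenus := gapsBelow_le_genus hfin (m + 1)
  rw [gapsBelow_succ_of_notMem hm] at hgenus
  omega

lemma add_one_le_gapsBelow_two_mul_add_one (hadd : ∀ a ∈ S, ∀ b ∈ S, a + b ∈ S)
    (hfin : Sᶜ.Finite) (h1 : 1 ∉ S) (h2 : 2 ∉ S) {i : ℕ} (hi : 1 ≤ i) (hig : i + 2 ≤ genus S) :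
    i + 1 ≤ gapsBelow S (2 * i + 1) := by
  by_contra! hlt
  obtain ⟨m, hm_ge, hm⟩ := exists_notMem_ge_of_gapsBelow_lt_genus hfin (n := 2 * i + 1) (by omega)
  have hN : gapsBelow S (2 * i + 1) = i := by
    have := le_two_mul_gapsBelow_add_one hadd hm hm_ge
    omega
  have hgap : 2 * i + 1 ∉ S := notMem_of_eq_two_mul_gapsBelow_add_one hadd (by omega) hm hm_ge
  have hN' : gapsBelow S (2 * i + 2) = i + 1 := by rw [gapsBelow_succ_of_notMem hgap, hN]
  have h2i : 2 * i ∈ S := by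
    simpa using sub_mem_of_eq_two_mul_gapsBelow_add_one hadd hgap (by omega) (by omega) h1
  by_cases h22 : 2 * i + 2 ∈ S
  · have hN'' : gapsBelow S (2 * i + 3) = i + 1 := by rw [gapsBelow_succ_of_mem h22, hN']
    obtain ⟨m', hm'_ge, hm'⟩ :=
      exists_notMem_ge_of_gapsBelow_lt_genus hfin (n := 2 * i + 3) (by omega)
    have hgap' : 2 * i + 3 ∉ S :=
      notMem_of_eq_two_mul_gapsBelow_add_one hadd (by omega) hm' hm'_ge
    have := sub_mem_of_eq_two_mul_gapsBelow_add_one hadd hgap' (by omega) (by omega) h2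
    exact hgap (by simpa using this)
  · exact h1 (mem_of_le_of_mem_of_add_one_notMem hadd hgap (by omega) h22 h2i (by omega) (by omega))

lemma genus_sub_one_le_gapsBelow (hadd : ∀ a ∈ S, ∀ b ∈ S, a + b ∈ S) (hfin : Sᶜ.Finite)
    (h1 : 1 ∉ S) (hg : 2 ≤ genus S) : genus S - 1 ≤ gapsBelow S (2 * genus S - 2) := by
  obtain ⟨n, hn⟩ : ∃ n, 2 * genus S = n + 1 + 1 := ⟨2 * genus S - 2, by omega⟩
  have hN : gapsBelow S (n + 1 + 1) = genus S :=
    hn ▸ gapsBelow_eq_genus hfin fun m hm => lt_two_mul_genus_of_notMem hadd hfin hm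
  rw [show 2 * genus S - 2 = n by omega]
  by_contra! hlt
  have hgap : n ∉ S := fun h => by
    have := gapsBelow_succ_le (S := S) (n + 1)
    rw [gapsBelow_succ_of_mem h] at this
    omega
  have hgap' : n + 1 ∉ S := fun h => by
    have := gapsBelow_succ_le (S := S) n
    rw [gapsBelow_succ_of_mem h] at hN
    omega
  rw [gapsBelow_succ_of_notMem hgap'] at hN
  have := sub_mem_of_eq_two_mul_gapsBelow_add_one hadd hgap' (by omega) n.le_succ hgap
  exact h1 (by simpa using this)

lemma count_mem_and_pos_add_one (h0 : 0 ∈ S) (n : ℕ) :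
    Nat.count (fun k => k ∈ S ∧ 0 < k) (n + 1) + 1 = Nat.count (· ∈ S) (n + 1) := by
  simp [Nat.count_succ', h0]

lemma le_nongap_iff (h0 : 0 ∈ S) (hfin : Sᶜ.Finite) {a i : ℕ} (ha : 1 ≤ a) (hi : 1 ≤ i) :
    a ≤ nongap S i ↔ a ≤ gapsBelow S a + i := by
  rw [nongap, ← Nat.count_le_iff_le_nth (infinite_setOf_mem_and_pos hfin)]
  obtain ⟨n, rfl⟩ := Nat.exists_eq_add_of_le' ha
  have := count_mem_and_pos_add_one h0 n
  have := count_mem_add_gapsBelow (S := S) (n + 1)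
  omega

end GapCounting

theorem stmt_0 (S : Set ℕ) (g : ℕ) (hS : IsNumSgp S) (hg : genus S = g)
    (hg1 : 1 ≤ g) (hm1 : 3 ≤ nongap S 1) :
    (∀ i, 1 ≤ i → i ≤ g - 2 → 2 * i + 1 ≤ nongap S i) ∧
    2 * g - 2 ≤ nongap S (g - 1) ∧ nongap S g = 2 * g := by
  classical
  obtain ⟨h0, hadd, hfin⟩ := hS
  subst hg
  have h1 : 1 ∉ S := fun h => by have := nongap_one_le h one_pos; omega
  have h2 : 2 ∉ S := fun h => by have := nongap_one_le h two_pos; omega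
  have hN : ∀ n, 2 * genus S ≤ n → gapsBelow S n = genus S := fun n hn =>
    gapsBelow_eq_genus hfin fun m hm => (lt_two_mul_genus_of_notMem hadd hfin hm).trans_le hn
  refine ⟨fun i hi hig => ?_, ?_, le_antisymm ?_ ?_⟩
  · rw [le_nongap_iff h0 hfin (by omega) hi]
    have := add_one_le_gapsBelow_two_mul_add_one hadd hfin h1 h2 hi (by omega)
    omega
  · rcases Nat.lt_or_ge (genus S) 2 with hg | hg
    · omega
    · rw [le_nongap_iff h0 hfin (by omega) (by omega)]
      have := genus_sub_one_le_gapsBelow hadd hfin h1 hg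
      omega
  · by_contra! hlt
    rw [← Nat.add_one_le_iff, le_nongap_iff h0 hfin (by omega) hg1, hN _ (by omega)] at hlt
    omega
  · rw [le_nongap_iff h0 hfin (by omega) hg1, hN _ le_rfl]
    omega
end

section
/- Let H be a numerical semigroup and let ρ(H) be the number of even gaps of H. Then every even integer of the form 4ρ(H)+2i with i ∈ ℕ belongs to H, i.e. {4ρ + 2i : i ∈ ℕ} ⊆ H where ρ = ρ(H). -/
/-! Halving the even elements of `S` gives the additively closed set `{m | 2 * m ∈ S}`, whose
gaps are the halves of the even gaps of `S`. For an additively closed `T ⊆ ℕ` with `g` gaps,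
every `n ≥ 2 * g` lies in `T`: if `n ∉ T`, then `k ↦ n - k` sends the elements of `T` below `n`
injectively to gaps below `n`, so at least half of `0, …, n` are gaps. -/

theorem lt_two_mul_ncard_compl_of_notMem {T : Set ℕ} (hadd : ∀ a ∈ T, ∀ b ∈ T, a + b ∈ T)
    (hfin : Tᶜ.Finite) {n : ℕ} (hn : n ∉ T) : n < 2 * Tᶜ.ncard := by
  classical
  set R := Finset.range (n + 1)
  have hreflect : (R.filter (· ∈ T)).card ≤ (R.filter (· ∉ T)).card := by
    refine Finset.card_le_card_of_injOn (fun k => n - k) ?_ ?_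
    · intro k hk
      simp only [Finset.coe_filter, Finset.mem_range, Set.mem_ofPred_eq, R] at hk ⊢
      refine ⟨by omega, fun hnk => hn ?_⟩
      simpa [Nat.add_sub_cancel' (by omega : k ≤ n)] using hadd k hk.2 (n - k) hnk
    · intro k hk l hl hkl
      simp only [Finset.coe_filter, Finset.mem_range, Set.mem_ofPred_eq, R] at hk hl hkl
      omega
  have hgaps : (R.filter (· ∉ T)).card ≤ Tᶜ.ncard := by
    rw [Set.ncard_eq_toFinset_card _ hfin]
    exact Finset.card_le_card fun k hk => by simpa using (Finset.mem_filter.1 hk).2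
  have hsplit := R.card_filter_add_card_filter_not (· ∈ T)
  rw [Finset.card_range] at hsplit
  omega

theorem evenGaps_eq_ncard_compl_preimage (S : Set ℕ) :
    evenGaps S = ((fun m => 2 * m) ⁻¹' S)ᶜ.ncard := by
  have himage : {n | n ∉ S ∧ Even n} = (fun m => 2 * m) '' ((fun m => 2 * m) ⁻¹' S)ᶜ := by
    ext n
    simp only [Set.mem_ofPred_eq, Set.mem_image, Set.mem_compl_iff, Set.mem_preimage,
      even_iff_exists_two_mul]
    constructor
    · rintro ⟨hn, m, rfl⟩
      exact ⟨m, hn, rfl⟩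
    · rintro ⟨m, hm, rfl⟩
      exact ⟨hm, m, rfl⟩
  rw [evenGaps, himage, Set.ncard_image_of_injective _ fun a b h => by simpa using h]

theorem stmt_2 (S : Set ℕ) (hS : IsNumSgp S) :
    ∀ i : ℕ, 4 * evenGaps S + 2 * i ∈ S := by
  obtain ⟨-, hadd, hfin⟩ := hS
  set T := (fun m => 2 * m) ⁻¹' S
  have hTadd : ∀ a ∈ T, ∀ b ∈ T, a + b ∈ T := fun a ha b hb => by
    simpa [T, mul_add] using hadd _ ha _ hb
  have hTfin : Tᶜ.Finite :=
    hfin.preimage fun a _ b _ h => by simpa using h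
  intro i
  by_contra hi
  have hlt := lt_two_mul_ncard_compl_of_notMem hTadd hTfin
    (n := 2 * evenGaps S + i) (by simpa [T, mul_add, ← mul_assoc] using hi)
  rw [← evenGaps_eq_ncard_compl_preimage] at hlt
  omega
end

section
/- Let H be a numerical semigroup of genus g and let ρ be the number of even gaps of H. Then 2g ≥ 3ρ. -/
/-!
Let `m` be the smallest odd element of `S`. For an even gap `e`, the odd number `|e - m|` is a
gap: if `e > m` then `e - m ∈ S` would give `e = (e - m) + m ∈ S`, and if `e < m` then `m - e`
is an odd number below `m`. Each odd gap `d` arises from at most two even gaps, `m + d` and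
`m - d`, so `ρ ≤ 2 (g - ρ)`.
-/

open Finset

noncomputable def oddGaps (S : Set ℕ) : ℕ := {n | n ∉ S ∧ Odd n}.ncard

lemma genus_eq_evenGaps_add_oddGaps {S : Set ℕ} (h : Sᶜ.Finite) :
    genus S = evenGaps S + oddGaps S := by
  have hodd : Sᶜ \ {n | Even n} = {n | n ∉ S ∧ Odd n} := by
    ext n
    simp [Nat.not_even_iff_odd]
  rw [genus, ← Set.ncard_inter_add_ncard_sdiff_eq_ncard Sᶜ {n | Even n} h, hodd]
  rfl

lemma exists_odd_mem_of_finite_compl {S : Set ℕ} (h : Sᶜ.Finite) : ∃ n, n ∈ S ∧ Odd n := by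
  obtain ⟨N, hN⟩ := h.bddAbove
  refine ⟨2 * N + 1, ?_, odd_two_mul_add_one N⟩
  by_contra hn
  have := hN hn
  omega

lemma Nat.card_filter_dist_eq_le_two (s : Finset ℕ) (m d : ℕ) :
    #{e ∈ s | Nat.dist e m = d} ≤ 2 := by
  have hsub : {e ∈ s | Nat.dist e m = d} ⊆ {m + d, m - d} := by
    intro e he
    rw [mem_filter, Nat.dist] at he
    simp only [mem_insert, mem_singleton]
    omega
  exact (card_le_card hsub).trans (card_insert_le _ _)

lemma Nat.odd_dist_of_even_of_odd {e m : ℕ} (he : Even e) (hm : Odd m) : Odd (Nat.dist e m) := by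
  rw [Nat.even_iff] at he
  rw [Nat.odd_iff] at hm ⊢
  rw [Nat.dist]
  omega

lemma dist_notMem_of_isLeast_odd {S : Set ℕ} (h0 : 0 ∈ S) (hadd : ∀ a ∈ S, ∀ b ∈ S, a + b ∈ S)
    {m e : ℕ} (hm : IsLeast {n | n ∈ S ∧ Odd n} m) (he : e ∉ S) (heven : Even e) :
    Nat.dist e m ∉ S := by
  obtain ⟨⟨hmS, hmodd⟩, hmin⟩ := hm
  rcases le_total m e with hme | hem
  · rw [Nat.dist_eq_sub_of_le_right hme]
    intro hd
    exact he (Nat.sub_add_cancel hme ▸ hadd _ hd _ hmS)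
  · have hodd := Nat.odd_dist_of_even_of_odd heven hmodd
    rw [Nat.dist_eq_sub_of_le hem] at hodd ⊢
    have he0 : e ≠ 0 := by rintro rfl; exact he h0
    intro hd
    have := hmin ⟨hd, hodd⟩
    omega

lemma IsNumSgp.evenGaps_le_two_mul_oddGaps {S : Set ℕ} (hS : IsNumSgp S) :
    evenGaps S ≤ 2 * oddGaps S := by
  obtain ⟨h0, hadd, hfin⟩ := hS
  obtain ⟨m, hm⟩ : ∃ m, IsLeast {n | n ∈ S ∧ Odd n} m :=
    ⟨_, isLeast_csInf (exists_odd_mem_of_finite_compl hfin)⟩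
  have hE : {n | n ∉ S ∧ Even n}.Finite := hfin.subset fun n hn => hn.1
  have hO : {n | n ∉ S ∧ Odd n}.Finite := hfin.subset fun n hn => hn.1
  rw [evenGaps, oddGaps, Set.ncard_eq_toFinset_card _ hE, Set.ncard_eq_toFinset_card _ hO]
  refine card_le_mul_card_image_of_maps_to (f := (Nat.dist · m)) ?_ 2
    fun d _ => Nat.card_filter_dist_eq_le_two _ m d
  intro e he
  rw [Set.Finite.mem_toFinset] at he ⊢
  exact ⟨dist_notMem_of_isLeast_odd h0 hadd hm he.1 he.2,
    Nat.odd_dist_of_even_of_odd he.2 hm.1.2⟩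

theorem stmt_3 (S : Set ℕ) (hS : IsNumSgp S) :
    3 * evenGaps S ≤ 2 * genus S := by
  have hsplit := genus_eq_evenGaps_add_oddGaps hS.2.2
  have hcount := hS.evenGaps_le_two_mul_oddGaps
  omega
end

section
/- Let H be a numerical semigroup of genus g with ρ even gaps, and suppose g ≥ 1. Then the smallest odd non-gap u_ρ of H satisfies u_ρ ≥ max{2g − 4ρ + 1, 3}. -/
/-!
Odd gaps below an odd element `u ∈ S` number at most `u / 2`, and every odd gap `n > u`
gives the even gap `n - u` (otherwise `n = u + (n - u) ∈ S`). Hence `g ≤ u / 2 + 2ρ`,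
i.e. `u ≥ 2g - 4ρ + 1`. Moreover `u ≠ 1`, since `1 ∈ S` forces `S = ℕ`.
-/

lemma ncard_odd_lt (k : ℕ) : {n | Odd n ∧ n < k}.ncard = k / 2 := by
  have himage : {n | Odd n ∧ n < k} = (fun i => 2 * i + 1) '' ↑(Finset.range (k / 2)) := by
    ext n
    simp only [Set.mem_ofPred_eq, Set.mem_image, Finset.coe_range, Set.mem_Iio]
    constructor
    · rintro ⟨⟨i, rfl⟩, hlt⟩
      exact ⟨i, by omega, rfl⟩
    · rintro ⟨i, hi, rfl⟩
      exact ⟨odd_two_mul_add_one i, by omega⟩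
  rw [himage, Set.ncard_image_of_injective _ (fun a b h => by omega), Set.ncard_coe_finset,
    Finset.card_range]

lemma genus_eq_ncard_odd_gaps_add_evenGaps {S : Set ℕ} (hfin : Sᶜ.Finite) :
    genus S = {n | n ∉ S ∧ Odd n}.ncard + evenGaps S := by
  have hsplit : Sᶜ = {n | n ∉ S ∧ Odd n} ∪ {n | n ∉ S ∧ Even n} := by
    ext n
    rcases Nat.even_or_odd n with h | h <;>
      simp [h, Nat.not_odd_iff_even.mpr, Nat.not_even_iff_odd.mpr]
  have hdisj : Disjoint {n | n ∉ S ∧ Odd n} {n | n ∉ S ∧ Even n} :=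
    Set.disjoint_left.mpr fun n hodd heven => Nat.not_even_iff_odd.mpr hodd.2 heven.2
  rw [genus, evenGaps, hsplit, Set.ncard_union_eq hdisj (hfin.subset fun n hn => hn.1)
    (hfin.subset fun n hn => hn.1)]

namespace IsNumSgp

variable {S : Set ℕ}

lemma exists_odd_mem (hS : IsNumSgp S) : ∃ n ∈ S, Odd n := by
  obtain ⟨N, hN⟩ := hS.2.2.bddAbove
  refine ⟨2 * N + 1, by_contra fun h => ?_, odd_two_mul_add_one N⟩
  have := hN h
  omega

lemma eq_univ_of_one_mem (hS : IsNumSgp S) (h1 : 1 ∈ S) : S = Set.univ := by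
  refine Set.eq_univ_of_forall fun n => ?_
  induction n with
  | zero => exact hS.1
  | succ k ih => exact hS.2.1 k ih 1 h1

lemma one_notMem (hS : IsNumSgp S) (hg : genus S ≠ 0) : 1 ∉ S := by
  intro h1
  apply hg
  rw [genus, hS.eq_univ_of_one_mem h1, Set.compl_univ, Set.ncard_empty]

lemma ncard_odd_gaps_gt_le_evenGaps (hS : IsNumSgp S) {u : ℕ} (hu : u ∈ S) (hodd : Odd u) :
    {n | n ∉ S ∧ Odd n ∧ u < n}.ncard ≤ evenGaps S := by
  have hmaps : Set.MapsTo (· - u) {n | n ∉ S ∧ Odd n ∧ u < n} {n | n ∉ S ∧ Even n} := by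
    rintro n ⟨hnS, hnodd, hlt⟩
    refine ⟨fun h => hnS ?_, Nat.Odd.sub_odd hnodd hodd⟩
    simpa [Nat.add_sub_cancel' hlt.le] using hS.2.1 u hu (n - u) h
  have hinj : Set.InjOn (· - u) {n | n ∉ S ∧ Odd n ∧ u < n} := by
    rintro a ⟨-, -, ha⟩ b ⟨-, -, hb⟩ h
    simp only at h
    omega
  exact Set.ncard_le_ncard_of_injOn _ hmaps hinj (hS.2.2.subset fun n hn => hn.1)

lemma genus_le (hS : IsNumSgp S) {u : ℕ} (hu : u ∈ S) (hodd : Odd u) :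
    genus S ≤ u / 2 + 2 * evenGaps S := by
  have hcover : {n | n ∉ S ∧ Odd n} ⊆ {n | Odd n ∧ n < u} ∪ {n | n ∉ S ∧ Odd n ∧ u < n} := by
    rintro n ⟨hnS, hnodd⟩
    rcases lt_trichotomy n u with hlt | rfl | hgt
    · exact Or.inl ⟨hnodd, hlt⟩
    · exact absurd hu hnS
    · exact Or.inr ⟨hnS, hnodd, hgt⟩
  have hfin : ({n | Odd n ∧ n < u} ∪ {n | n ∉ S ∧ Odd n ∧ u < n}).Finite :=
    ((Set.finite_lt_nat u).subset fun n hn => hn.2).union (hS.2.2.subset fun n hn => hn.1)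
  have hodd_gaps : {n | n ∉ S ∧ Odd n}.ncard ≤ u / 2 + evenGaps S :=
    calc {n | n ∉ S ∧ Odd n}.ncard
        ≤ ({n | Odd n ∧ n < u} ∪ {n | n ∉ S ∧ Odd n ∧ u < n}).ncard :=
          Set.ncard_le_ncard hcover hfin
      _ ≤ {n | Odd n ∧ n < u}.ncard + {n | n ∉ S ∧ Odd n ∧ u < n}.ncard := Set.ncard_union_le _ _
      _ ≤ u / 2 + evenGaps S := by
          rw [ncard_odd_lt]
          exact Nat.add_le_add_left (hS.ncard_odd_gaps_gt_le_evenGaps hu hodd) _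
  rw [genus_eq_ncard_odd_gaps_add_evenGaps hS.2.2]
  omega

end IsNumSgp

theorem stmt_4 (S : Set ℕ) (hS : IsNumSgp S) (hg : 1 ≤ genus S) :
    max (2 * genus S - 4 * evenGaps S + 1) 3 ≤ sInf {n ∈ S | Odd n} := by
  obtain ⟨huS, hodd⟩ : sInf {n ∈ S | Odd n} ∈ S ∧ Odd (sInf {n ∈ S | Odd n}) :=
    Nat.sInf_mem hS.exists_odd_mem
  set u := sInf {n ∈ S | Odd n}
  have hu1 : u ≠ 1 := fun h => hS.one_notMem (by omega) (h ▸ huS)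
  have hbound := hS.genus_le huS hodd
  obtain ⟨k, hk⟩ := hodd
  omega
end

section
/- Let H be a numerical semigroup of genus g with ρ even gaps. If g ≤ 2ρ − 1, then the smallest odd element u_ρ of H satisfies u_ρ ≥ 4ρ − 2g + 1. -/
theorem stmt_5 (S : Set ℕ) (hS : IsNumSgp S)
    (h : genus S ≤ 2 * evenGaps S - 1) :
    4 * evenGaps S - 2 * genus S + 1 ≤ sInf {n ∈ S | Odd n} := by
  obtain ⟨h0, hadd, hfin⟩ := hS
  -- S contains an odd element
  have hodd_inf : {n : ℕ | Odd n}.Infinite := by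
    apply Set.infinite_of_injective_forall_mem (f := fun n : ℕ => 2 * n + 1)
    · intro a b hab; simp only at hab; omega
    · intro n; exact ⟨n, rfl⟩
  have hne : {n ∈ S | Odd n}.Nonempty := by
    by_contra hc
    rw [Set.not_nonempty_iff_eq_empty] at hc
    have hsub : {n : ℕ | Odd n} ⊆ Sᶜ := by
      intro n hn hnS
      have : n ∈ {n ∈ S | Odd n} := ⟨hnS, hn⟩
      simp [hc] at this
    exact hodd_inf (hfin.subset hsub)
  set u := sInf {n ∈ S | Odd n} with hu_def
  have hu : u ∈ {n ∈ S | Odd n} := Nat.sInf_mem hne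
  obtain ⟨huS, huodd⟩ := hu
  obtain ⟨t, ht⟩ := huodd
  -- sets of even/odd gaps
  set E : Set ℕ := {n | n ∉ S ∧ Even n} with hE_def
  set O : Set ℕ := {n | n ∉ S ∧ Odd n} with hO_def
  have hEfin : E.Finite := hfin.subset (fun n hn => hn.1)
  have hOfin : O.Finite := hfin.subset (fun n hn => hn.1)
  have hcompl : Sᶜ = E ∪ O := by
    ext n
    simp only [Set.mem_compl_iff, Set.mem_union, hE_def, hO_def, Set.mem_setOf_eq]
    rcases Nat.even_or_odd n with he | ho
    · constructor
      · intro hn; exact Or.inl ⟨hn, he⟩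
      · rintro (⟨hn, _⟩ | ⟨hn, _⟩) <;> exact hn
    · constructor
      · intro hn; exact Or.inr ⟨hn, ho⟩
      · rintro (⟨hn, _⟩ | ⟨hn, _⟩) <;> exact hn
  have hgenus : genus S = E.ncard + O.ncard := by
    rw [genus, hcompl, Set.ncard_union_eq _ hEfin hOfin]
    rw [Set.disjoint_left]
    rintro n ⟨_, hne⟩ ⟨_, hno⟩
    exact (Nat.not_odd_iff_even.2 hne) hno
  -- split E by u
  set E1 : Set ℕ := E ∩ Set.Iio u with hE1_def
  set E2 : Set ℕ := E ∩ Set.Ioi u with hE2_def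
  have hEsplit : E = E1 ∪ E2 := by
    ext n
    simp only [hE1_def, hE2_def, Set.mem_union, Set.mem_inter_iff, Set.mem_Iio, Set.mem_Ioi]
    constructor
    · intro hn
      rcases lt_trichotomy n u with hlt | heq | hgt
      · exact Or.inl ⟨hn, hlt⟩
      · exfalso; exact hn.1 (heq ▸ huS)
      · exact Or.inr ⟨hn, hgt⟩
    · rintro (⟨hn, _⟩ | ⟨hn, _⟩) <;> exact hn
  have hEcard : E.ncard = E1.ncard + E2.ncard := by
    rw [hEsplit, Set.ncard_union_eq _ (hEfin.subset (by rw [hEsplit]; exact Set.subset_union_left))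
      (hEfin.subset (by rw [hEsplit]; exact Set.subset_union_right))]
    rw [Set.disjoint_left]
    rintro n ⟨_, h1⟩ ⟨_, h2⟩
    simp only [Set.mem_Iio] at h1
    simp only [Set.mem_Ioi] at h2
    omega
  -- E1 injects into Icc 1 t via n/2
  have hE1card : E1.ncard ≤ t := by
    have : E1.ncard ≤ (Set.Icc 1 t).ncard := by
      apply Set.ncard_le_ncard_of_injOn (fun n => n / 2)
      · rintro n ⟨⟨hnS, hne⟩, hlt⟩
        simp only [Set.mem_Iio] at hlt
        obtain ⟨a, rfl⟩ := hne
        have ha0 : a ≠ 0 := by rintro rfl; exact hnS h0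
        simp only [Set.mem_Icc]
        omega
      · rintro n ⟨⟨_, hne⟩, _⟩ m ⟨⟨_, hme⟩, _⟩ hnm
        obtain ⟨a, rfl⟩ := hne
        obtain ⟨b, rfl⟩ := hme
        simp only at hnm
        omega
    rw [← Finset.coe_Icc, Set.ncard_coe_finset, Nat.card_Icc] at this
    omega
  -- E2 injects into O via n - u
  have hE2card : E2.ncard ≤ O.ncard := by
    refine Set.ncard_le_ncard_of_injOn (fun n => n - u) ?_ ?_ hOfin
    · rintro n ⟨⟨hnS, hne⟩, hgt⟩
      simp only [Set.mem_Ioi] at hgt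
      constructor
      · intro hmem
        have h2 := hadd u huS (n - u) hmem
        rw [Nat.add_sub_cancel' hgt.le] at h2
        exact hnS h2
      · obtain ⟨a, rfl⟩ := hne
        refine ⟨a - t - 1, ?_⟩
        omega
    · rintro n ⟨_, hn⟩ m ⟨_, hm⟩ hnm
      simp only [Set.mem_Ioi] at hn hm
      simp only at hnm
      omega
  have hkey : 2 * E.ncard ≤ t + genus S := by omega
  have hgoal : 4 * evenGaps S - 2 * genus S + 1 ≤ u := by
    have : evenGaps S = E.ncard := rfl
    omega
  exact hgoal
end

section
/- Let H be a numerical semigroup and γ ≥ 0 an integer. If H is γ-hyperelliptic, then the number of even gaps of H equals γ. -/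
theorem stmt_6 (S : Set ℕ) (γ : ℕ) (hS : IsNumSgp S) (h : GammaHyper S γ) :
    evenGaps S = γ := by
  classical
  obtain ⟨h0, hadd, hfin⟩ := hS
  obtain ⟨h1, h2⟩ := h
  -- Step A : 4γ+2 ∈ S
  have hinf : {n | n ∈ S ∧ 0 < n}.Infinite := by
    have hsub : {n | n ∈ S ∧ 0 < n}ᶜ ⊆ Sᶜ ∪ {0} := by
      intro n hn
      simp only [Set.mem_compl_iff, Set.mem_setOf_eq, not_and_or, not_lt, Nat.le_zero] at hn
      rcases hn with h | h
      · exact Or.inl h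
      · exact Or.inr h
    have hc : ({n | n ∈ S ∧ 0 < n}ᶜ).Finite := (hfin.union (Set.finite_singleton 0)).subset hsub
    have := hc.infinite_compl
    rwa [compl_compl] at this
  have hmem : 4 * γ + 2 ∈ S := by
    have hnth := Nat.nth_mem_of_infinite hinf γ
    unfold nongap at h2
    simp only [Nat.add_sub_cancel] at h2
    rw [h2] at hnth
    exact hnth.1
  -- Step B : the set A of t in [1,2γ] with 2t ∈ S has exactly γ elements
  set A : Finset ℕ := (Finset.Icc 1 (2 * γ)).filter (fun t => 2 * t ∈ S) with hAdef
  have hset : {n | n ∈ S ∧ Even n ∧ 2 ≤ n ∧ n ≤ 4 * γ} = ↑(A.image (fun t => 2 * t)) := by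
    ext n
    simp only [Set.mem_setOf_eq, Finset.coe_image, Set.mem_image, Finset.mem_coe,
      Finset.mem_filter, Finset.mem_Icc, hAdef]
    constructor
    · rintro ⟨hnS, ⟨t, ht⟩, hn2, hn4⟩
      refine ⟨t, ⟨⟨by omega, by omega⟩, ?_⟩, by omega⟩
      have : 2 * t = n := by omega
      rwa [this]
    · rintro ⟨t, ⟨⟨ht1, ht2⟩, htS⟩, rfl⟩
      exact ⟨htS, ⟨t, by omega⟩, by omega, by omega⟩
  have hA : A.card = γ := by
    have h1' : (↑(A.image (fun t => 2 * t)) : Set ℕ).ncard = γ := by rw [← hset]; exact h1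
    rw [Set.ncard_coe_finset] at h1'
    rwa [Finset.card_image_of_injective _ (fun a b hab => by omega)] at h1'
  -- Step C : every n ≥ 2γ+1 has 2n ∈ S
  have key : ∀ n, 2 * γ + 1 ≤ n → 2 * n ∈ S := by
    intro n
    induction n using Nat.strong_induction_on with
    | _ n ih =>
      intro hn
      rcases eq_or_lt_of_le hn with heq | hlt
      · have : 2 * n = 4 * γ + 2 := by omega
        rw [this]; exact hmem
      · by_contra hns
        have hn2 : 2 * γ + 2 ≤ n := by omega
        set Tfin : Finset ℕ := (Finset.Icc 1 (n - 1)).filter (fun t => 2 * t ∈ S) with hTdef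
        set Gfin : Finset ℕ := (Finset.Icc 1 (n - 1)).filter (fun t => ¬ (2 * t ∈ S)) with hGdef
        have hTG : Tfin.card + Gfin.card = n - 1 := by
          rw [hTdef, hGdef, Finset.card_filter_add_card_filter_not]
          simp [Nat.card_Icc]
        have hTeq : Tfin = A ∪ Finset.Icc (2 * γ + 1) (n - 1) := by
          ext t
          simp only [hTdef, hAdef, Finset.mem_filter, Finset.mem_Icc, Finset.mem_union]
          constructor
          · rintro ⟨⟨ht1, ht2⟩, htS⟩
            rcases le_or_gt t (2 * γ) with h' | h'
            · exact Or.inl ⟨⟨ht1, h'⟩, htS⟩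
            · exact Or.inr ⟨by omega, ht2⟩
          · rintro (⟨⟨ht1, ht2⟩, htS⟩ | ⟨ht1, ht2⟩)
            · exact ⟨⟨ht1, by omega⟩, htS⟩
            · exact ⟨⟨by omega, ht2⟩, ih t (by omega) ht1⟩
        have hTcard : Tfin.card = n - 1 - γ := by
          rw [hTeq, Finset.card_union_of_disjoint]
          · rw [hA, Nat.card_Icc]; omega
          · rw [Finset.disjoint_left]
            intro t ht ht'
            simp only [hAdef, Finset.mem_filter, Finset.mem_Icc] at ht
            simp only [Finset.mem_Icc] at ht'
            omega
        have hinj : Tfin.card ≤ Gfin.card := by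
          apply Finset.card_le_card_of_injOn (fun t => n - t)
          · intro t ht
            simp only [hTdef, Finset.mem_coe, Finset.mem_filter, Finset.mem_Icc] at ht
            simp only [hGdef, Finset.mem_coe, Finset.mem_filter, Finset.mem_Icc]
            refine ⟨⟨by omega, by omega⟩, ?_⟩
            intro hcon
            have : 2 * t + 2 * (n - t) = 2 * n := by omega
            exact hns (this ▸ hadd _ ht.2 _ hcon)
          · intro a ha b hb hab
            simp only [hTdef, Finset.mem_coe, Finset.mem_filter, Finset.mem_Icc] at ha hb
            have hab' : n - a = n - b := hab
            omega
        omega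
  -- Final counting
  set Gt : Finset ℕ := (Finset.Icc 1 (2 * γ)).filter (fun t => ¬ (2 * t ∈ S)) with hGtdef
  have hGt : Gt.card = γ := by
    have := Finset.card_filter_add_card_filter_not
      (s := Finset.Icc 1 (2 * γ)) (p := fun t => 2 * t ∈ S)
    rw [← hAdef, ← hGtdef] at this
    rw [Nat.card_Icc] at this
    omega
  have hset2 : {n | n ∉ S ∧ Even n} = ↑(Gt.image (fun t => 2 * t)) := by
    ext n
    simp only [Set.mem_setOf_eq, Finset.coe_image, Set.mem_image, Finset.mem_coe,
      Finset.mem_filter, Finset.mem_Icc, hGtdef]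
    constructor
    · rintro ⟨hnS, ⟨t, ht⟩⟩
      have htn : 2 * t = n := by omega
      have ht1 : 1 ≤ t := by
        rcases Nat.eq_zero_or_pos t with rfl | h'
        · exfalso; apply hnS; have : n = 0 := by omega
          rw [this]; exact h0
        · exact h'
      have ht2 : t ≤ 2 * γ := by
        by_contra hc
        exact hnS (htn ▸ key t (by omega))
      exact ⟨t, ⟨⟨ht1, ht2⟩, htn ▸ hnS⟩, htn⟩
    · rintro ⟨t, ⟨⟨ht1, ht2⟩, htS⟩, rfl⟩
      exact ⟨htS, ⟨t, by omega⟩⟩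
  unfold evenGaps
  rw [hset2, Set.ncard_coe_finset,
    Finset.card_image_of_injective _ (mul_right_injective₀ (two_ne_zero) : Function.Injective (fun t => 2 * t)),
    hGt]
end

section
/- Let H be a numerical semigroup of genus g with ρ ≥ 1 even gaps. Denote by f_i the i-th smallest even element of H. Then: (i) if f₁ = 4 then f_i = 4i for i = 1,...,ρ; (ii) if f₁ ≥ 6 then f_i ≥ 4i+2 for i = 1,...,ρ−2, f_{ρ−1} ≥ 4ρ−4 and f_ρ = 4ρ; (iii) f_i ≤ 2ρ + 2i for every i. -/
open scoped Classical


/-- The i-th smallest positive even element of `S`, 1-indexed. -/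
noncomputable def evenNongap (S : Set ℕ) (i : ℕ) : ℕ :=
  Nat.nth (fun n => n ∈ S ∧ Even n ∧ 0 < n) (i - 1)


open Finset in
/-- Core injection: below a gap, nongaps are at most gaps. -/
theorem myL1 (T : Set ℕ) (hadd : ∀ a ∈ T, ∀ b ∈ T, a + b ∈ T) {g : ℕ} (hg : g ∉ T) :
    ((range (g+1)).filter (· ∈ T)).card ≤ ((range (g+1)).filter (· ∉ T)).card := by
  classical
  apply Finset.card_le_card_of_injOn (fun t => g - t)
  · intro t ht
    simp only [Finset.mem_coe, mem_filter, mem_range] at ht ⊢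
    refine ⟨by omega, fun hmem => hg ?_⟩
    have := hadd t ht.2 (g - t) hmem
    have : t ≤ g := by omega
    simpa [Nat.add_sub_cancel' this] using hadd _ ht.2 _ hmem
  · intro a ha b hb hab
    simp only [Finset.coe_filter, Set.mem_setOf_eq, mem_range] at ha hb
    have hab' : g - a = g - b := hab
    omega

open Finset in
/-- Surjectivity in the equality case. -/
theorem myL1' (T : Set ℕ) (hadd : ∀ a ∈ T, ∀ b ∈ T, a + b ∈ T) {g : ℕ} (hg : g ∉ T)
    (heq : ((range (g+1)).filter (· ∈ T)).card = ((range (g+1)).filter (· ∉ T)).card) :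
    ∀ h ≤ g, h ∉ T → g - h ∈ T := by
  classical
  intro h hle hh
  have hsub : ((range (g+1)).filter (· ∈ T)).image (fun t => g - t)
      ⊆ (range (g+1)).filter (· ∉ T) := by
    intro x hx
    simp only [mem_image, mem_filter, mem_range] at hx ⊢
    obtain ⟨t, ⟨htr, htT⟩, rfl⟩ := hx
    refine ⟨by omega, fun hmem => hg ?_⟩
    have : t ≤ g := by omega
    simpa [Nat.add_sub_cancel' this] using hadd _ htT _ hmem
  have hinj : Set.InjOn (fun t => g - t) ((range (g+1)).filter (· ∈ T)) := by
    intro a ha b hb hab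
    simp only [Finset.coe_filter, Set.mem_setOf_eq, mem_range] at ha hb
    have hab' : g - a = g - b := hab
    omega
  have hcard : (((range (g+1)).filter (· ∈ T)).image (fun t => g - t)).card
      = ((range (g+1)).filter (· ∉ T)).card := by
    rw [Finset.card_image_of_injOn hinj, heq]
  have := Finset.eq_of_subset_of_card_le hsub (le_of_eq hcard.symm)
  have hmem : h ∈ ((range (g+1)).filter (· ∈ T)).image (fun t => g - t) := by
    rw [this]; simp [mem_filter, mem_range, hh, Nat.lt_succ_of_le hle]
  simp only [mem_image, mem_filter, mem_range] at hmem
  obtain ⟨t, ⟨htr, htT⟩, rfl⟩ := hmem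
  have : g - (g - t) = t := by omega
  rwa [this]

open Finset in
theorem count_split (T : Set ℕ) (h0 : 0 ∈ T) {m : ℕ} (hm : 1 ≤ m) :
    Nat.count (fun n => n ∈ T ∧ 0 < n) m + ((range m).filter (· ∉ T)).card + 1 = m := by
  classical
  rw [Nat.count_eq_card_filter_range]
  have hA : (range m).filter (· ∈ T) = insert 0 ((range m).filter (fun n => n ∈ T ∧ 0 < n)) := by
    ext n
    simp only [mem_filter, mem_range, mem_insert]
    constructor
    · rintro ⟨h1, h2⟩
      rcases Nat.eq_zero_or_pos n with rfl | hp
      · exact Or.inl rfl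
      · exact Or.inr ⟨h1, h2, hp⟩
    · rintro (rfl | ⟨h1, h2, h3⟩)
      · exact ⟨hm, h0⟩
      · exact ⟨h1, h2⟩
  have h0n : 0 ∉ (range m).filter (fun n => n ∈ T ∧ 0 < n) := by simp
  have hcard : ((range m).filter (· ∈ T)).card
      = ((range m).filter (fun n => n ∈ T ∧ 0 < n)).card + 1 := by
    rw [hA, Finset.card_insert_of_notMem h0n]
  have htot := Finset.card_filter_add_card_filter_not (s := range m) (p := (· ∈ T))
  simp only [Finset.card_range] at htot
  omega

open Finset in
theorem gaps_le_ncard (T : Set ℕ) (hfin : Tᶜ.Finite) (m : ℕ) :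
    ((range m).filter (· ∉ T)).card ≤ Tᶜ.ncard := by
  classical
  rw [Set.ncard_eq_toFinset_card _ hfin]
  apply Finset.card_le_card
  intro n hn
  simp only [Finset.mem_filter, Finset.mem_range] at hn
  simp [Set.Finite.mem_toFinset, hn.2]

open Finset in
theorem gaps_eq_ncard (T : Set ℕ) (hfin : Tᶜ.Finite) {m : ℕ} (hall : ∀ n ∉ T, n < m) :
    ((range m).filter (· ∉ T)).card = Tᶜ.ncard := by
  classical
  have : (range m).filter (· ∉ T) = hfin.toFinset := by
    ext n
    simp only [mem_filter, mem_range, Set.Finite.mem_toFinset, Set.mem_compl_iff]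
    exact ⟨fun h => h.2, fun h => ⟨hall n h, h⟩⟩
  rw [this, Set.ncard_eq_toFinset_card _ hfin]

theorem qinf (T : Set ℕ) (hfin : Tᶜ.Finite) : {n | n ∈ T ∧ 0 < n}.Infinite := by
  have h1 : {n | n ∈ T ∧ 0 < n} = T \ {0} := by
    ext n; simp [Nat.pos_iff_ne_zero]
  rw [h1]
  exact ((Set.Finite.infinite_compl hfin).mono (by rw [compl_compl])).diff (Set.finite_singleton 0)

open Finset in
theorem frob (T : Set ℕ) (hadd : ∀ a ∈ T, ∀ b ∈ T, a + b ∈ T) (hfin : Tᶜ.Finite)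
    {ρ : ℕ} (hρ : Tᶜ.ncard = ρ) (hρ1 : 1 ≤ ρ) : ∀ n ∉ T, n < 2 * ρ := by
  classical
  have hcard : hfin.toFinset.card = ρ := by
    rw [← Set.ncard_eq_toFinset_card _ hfin, hρ]
  have hne : hfin.toFinset.Nonempty := by
    rw [← Finset.card_pos, hcard]; omega
  set F := hfin.toFinset.max' hne with hFdef
  have hF : F ∉ T := by
    have := hfin.toFinset.max'_mem hne
    simpa [Set.Finite.mem_toFinset] using this
  have hmax : ∀ n ∉ T, n ≤ F := by
    intro n hn
    exact Finset.le_max' _ n (by simpa [Set.Finite.mem_toFinset] using hn)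
  have hB : ((range (F+1)).filter (· ∉ T)).card = ρ := by
    rw [gaps_eq_ncard T hfin (fun n hn => by have := hmax n hn; omega), hρ]
  have hA := myL1 T hadd hF
  have htot := Finset.card_filter_add_card_filter_not (s := range (F+1)) (p := (· ∈ T))
  simp only [Finset.card_range] at htot
  intro n hn
  have := hmax n hn
  omega

theorem nth_upper (T : Set ℕ) (h0 : 0 ∈ T) (hfin : Tᶜ.Finite)
    {ρ : ℕ} (hρ : Tᶜ.ncard = ρ) : ∀ i, 1 ≤ i →
    Nat.nth (fun n => n ∈ T ∧ 0 < n) (i-1) ≤ ρ + i := by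
  classical
  intro i hi
  have hinf := qinf T hfin
  have hcs := count_split T h0 (m := ρ + i + 1) (by omega)
  have hb := gaps_le_ncard T hfin (ρ + i + 1)
  rw [hρ] at hb
  have hlt : i - 1 < Nat.count (fun n => n ∈ T ∧ 0 < n) (ρ + i + 1) := by omega
  have := (Nat.lt_nth_iff_count_lt hinf).mp hlt
  omega

theorem nth_last (T : Set ℕ) (h0 : 0 ∈ T) (hadd : ∀ a ∈ T, ∀ b ∈ T, a + b ∈ T)
    (hfin : Tᶜ.Finite) {ρ : ℕ} (hρ : Tᶜ.ncard = ρ) (hρ1 : 1 ≤ ρ) :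
    Nat.nth (fun n => n ∈ T ∧ 0 < n) (ρ-1) = 2 * ρ := by
  classical
  have hfr := frob T hadd hfin hρ hρ1
  have hq : 2 * ρ ∈ T ∧ 0 < 2 * ρ := by
    refine ⟨?_, by omega⟩
    by_contra hc
    exact absurd (hfr _ hc) (by omega)
  have hB : ((Finset.range (2*ρ)).filter (· ∉ T)).card = ρ := by
    rw [gaps_eq_ncard T hfin (fun n hn => hfr n hn), hρ]
  have hcs := count_split T h0 (m := 2*ρ) (by omega)
  have hcount : Nat.count (fun n => n ∈ T ∧ 0 < n) (2*ρ) = ρ - 1 := by omega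
  have := Nat.nth_count (p := fun n => n ∈ T ∧ 0 < n) hq
  rwa [hcount] at this

theorem nth_penult (T : Set ℕ) (h0 : 0 ∈ T) (hadd : ∀ a ∈ T, ∀ b ∈ T, a + b ∈ T)
    (hfin : Tᶜ.Finite) {ρ : ℕ} (hρ : Tᶜ.ncard = ρ) (hρ2 : 2 ≤ ρ) (h1 : 1 ∉ T) :
    2 * ρ - 2 ≤ Nat.nth (fun n => n ∈ T ∧ 0 < n) (ρ-2) := by
  classical
  have hinf := qinf T hfin
  have hfr := frob T hadd hfin hρ (by omega)
  have hone : 2 * ρ - 2 ∈ T ∨ 2 * ρ - 1 ∈ T := by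
    by_contra hc
    push_neg at hc
    obtain ⟨ha, hb⟩ := hc
    have hgap : 2 * ρ - 1 ∉ T := hb
    have hB : ((Finset.range (2*ρ)).filter (· ∉ T)).card = ρ := by
      rw [gaps_eq_ncard T hfin (fun n hn => hfr n hn), hρ]
    have htot := Finset.card_filter_add_card_filter_not
      (s := Finset.range (2*ρ)) (p := (· ∈ T))
    simp only [Finset.card_range] at htot
    have heq1 : 2 * ρ - 1 + 1 = 2 * ρ := by omega
    have hAle := myL1 T hadd hgap
    rw [heq1] at hAle
    have heq2 : ((Finset.range (2*ρ)).filter (· ∈ T)).card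
        = ((Finset.range (2*ρ)).filter (· ∉ T)).card := by omega
    have hsurj := myL1' T hadd hgap (by rw [heq1]; exact heq2)
    have := hsurj (2*ρ-2) (by omega) ha
    have he : 2*ρ-1 - (2*ρ-2) = 1 := by omega
    rw [he] at this
    exact h1 this
  -- count q (2ρ) = ρ - 1
  have hB : ((Finset.range (2*ρ)).filter (· ∉ T)).card = ρ := by
    rw [gaps_eq_ncard T hfin (fun n hn => hfr n hn), hρ]
  have hcs := count_split T h0 (m := 2*ρ) (by omega)
  have hc2 : Nat.count (fun n => n ∈ T ∧ 0 < n) (2*ρ) = ρ - 1 := by omega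
  have hs1 : Nat.count (fun n => n ∈ T ∧ 0 < n) (2*ρ-2+1)
      = Nat.count (fun n => n ∈ T ∧ 0 < n) (2*ρ-2)
        + if (2*ρ-2 ∈ T ∧ 0 < 2*ρ-2) then 1 else 0 := Nat.count_succ _ _
  have hs2 : Nat.count (fun n => n ∈ T ∧ 0 < n) (2*ρ-2+1+1)
      = Nat.count (fun n => n ∈ T ∧ 0 < n) (2*ρ-2+1)
        + if (2*ρ-2+1 ∈ T ∧ 0 < 2*ρ-2+1) then 1 else 0 := Nat.count_succ _ _
  have he : 2*ρ-2+1+1 = 2*ρ := by omega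
  rw [he] at hs2
  have hle : Nat.count (fun n => n ∈ T ∧ 0 < n) (2*ρ-2) ≤ ρ - 2 := by
    rcases hone with h | h
    · have : (2*ρ-2 ∈ T ∧ 0 < 2*ρ-2) := ⟨h, by omega⟩
      simp only [if_pos this] at hs1
      omega
    · have he2 : 2*ρ-2+1 = 2*ρ-1 := by omega
      have : (2*ρ-2+1 ∈ T ∧ 0 < 2*ρ-2+1) := ⟨by rw [he2]; exact h, by omega⟩
      simp only [if_pos this] at hs2
      omega
  exact (Nat.count_le_iff_le_nth hinf).mp (by omega)

open Finset in
theorem core (T : Set ℕ) (hadd : ∀ a ∈ T, ∀ b ∈ T, a + b ∈ T) (hfin : Tᶜ.Finite) (j : ℕ)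
    (h3 : 2*j+3 ∈ T) (h4 : 2*j+4 ∈ T)
    (hB : ((range (2*j+4)).filter (· ∉ T)).card = j+2)
    (h1 : 1 ∉ T) (h2 : 2 ∉ T) (hbig : j+4 ≤ Tᶜ.ncard) : False := by
  classical
  have hGFcard : hfin.toFinset.card = Tᶜ.ncard := (Set.ncard_eq_toFinset_card _ hfin).symm
  -- generic: for any m, the gaps < m as a filter of GF
  have hsplit : ∀ m : ℕ, hfin.toFinset.filter (fun n => n < m)
      = (range m).filter (· ∉ T) := by
    intro m
    ext n
    simp only [mem_filter, mem_range, Set.Finite.mem_toFinset, Set.mem_compl_iff]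
    tauto
  have hGFsplit : ∀ m : ℕ, (hfin.toFinset.filter (fun n => ¬ n < m)).card
      + ((range m).filter (· ∉ T)).card = hfin.toFinset.card := by
    intro m
    rw [← hsplit m]
    have := Finset.card_filter_add_card_filter_not
      (s := hfin.toFinset) (p := fun n => n < m)
    omega
  -- first gap above 2j+4
  have hc1 : 2 ≤ (hfin.toFinset.filter (fun n => ¬ n < 2*j+4)).card := by
    have := hGFsplit (2*j+4); omega
  have hne1 : (hfin.toFinset.filter (fun n => ¬ n < 2*j+4)).Nonempty := by
    rw [← Finset.card_pos]; omega
  set g₁ := (hfin.toFinset.filter (fun n => ¬ n < 2*j+4)).min' hne1 with hg1def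
  have hg1mem := (hfin.toFinset.filter (fun n => ¬ n < 2*j+4)).min'_mem hne1
  rw [mem_filter, Set.Finite.mem_toFinset, Set.mem_compl_iff] at hg1mem
  have hg1T : g₁ ∉ T := hg1mem.1
  have hg1ge : 2*j+5 ≤ g₁ := by
    rcases Nat.lt_or_ge g₁ (2*j+5) with h | h
    · exfalso
      have : g₁ = 2*j+4 := by omega
      rw [this] at hg1T; exact hg1T h4
    · exact h
  have hg1min : ∀ n ∉ T, 2*j+4 ≤ n → g₁ ≤ n := by
    intro n hn hge
    exact Finset.min'_le _ n (by
      simp only [mem_filter, Set.Finite.mem_toFinset, Set.mem_compl_iff]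
      exact ⟨hn, by omega⟩)
  -- B(g₁+1) card = j+3
  have hBg1 : (range (g₁+1)).filter (· ∉ T)
      = insert g₁ ((range (2*j+4)).filter (· ∉ T)) := by
    ext n
    simp only [mem_insert, mem_filter, mem_range]
    constructor
    · rintro ⟨hr, hn⟩
      rcases Nat.lt_or_ge n (2*j+4) with h | h
      · exact Or.inr ⟨h, hn⟩
      · exact Or.inl (le_antisymm (by omega) (hg1min n hn h))
    · rintro (rfl | ⟨hr, hn⟩)
      · exact ⟨by omega, hg1T⟩
      · exact ⟨by omega, hn⟩
  have hg1nm : g₁ ∉ (range (2*j+4)).filter (· ∉ T) := by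
    simp only [mem_filter, mem_range]; omega
  have hBg1c : ((range (g₁+1)).filter (· ∉ T)).card = j+3 := by
    rw [hBg1, Finset.card_insert_of_notMem hg1nm, hB]
  have htot1 := Finset.card_filter_add_card_filter_not
    (s := range (g₁+1)) (p := (· ∈ T))
  simp only [Finset.card_range] at htot1
  have hg1le := myL1 T hadd hg1T
  have hg1eq : g₁ = 2*j+5 := by omega
  rw [hg1eq] at hg1T hBg1c htot1
  -- surjectivity at 2j+5
  have heqc : ((range (2*j+5+1)).filter (· ∈ T)).card
      = ((range (2*j+5+1)).filter (· ∉ T)).card := by omega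
  have hsurj := myL1' T hadd hg1T heqc
  -- second gap
  have hB6 : ((range (2*j+6)).filter (· ∉ T)).card = j+3 := by
    have : 2*j+5+1 = 2*j+6 := by omega
    rwa [this] at hBg1c
  have hc2 : 1 ≤ (hfin.toFinset.filter (fun n => ¬ n < 2*j+6)).card := by
    have := hGFsplit (2*j+6); omega
  have hne2 : (hfin.toFinset.filter (fun n => ¬ n < 2*j+6)).Nonempty := by
    rw [← Finset.card_pos]; omega
  set g₂ := (hfin.toFinset.filter (fun n => ¬ n < 2*j+6)).min' hne2 with hg2def
  have hg2mem := (hfin.toFinset.filter (fun n => ¬ n < 2*j+6)).min'_mem hne2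
  rw [mem_filter, Set.Finite.mem_toFinset, Set.mem_compl_iff] at hg2mem
  have hg2T : g₂ ∉ T := hg2mem.1
  have hg2ge : 2*j+6 ≤ g₂ := by omega
  have hg2min : ∀ n ∉ T, 2*j+6 ≤ n → g₂ ≤ n := by
    intro n hn hge
    exact Finset.min'_le _ n (by
      simp only [mem_filter, Set.Finite.mem_toFinset, Set.mem_compl_iff]
      exact ⟨hn, by omega⟩)
  have hBg2 : (range (g₂+1)).filter (· ∉ T)
      = insert g₂ ((range (2*j+6)).filter (· ∉ T)) := by
    ext n
    simp only [mem_insert, mem_filter, mem_range]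
    constructor
    · rintro ⟨hr, hn⟩
      rcases Nat.lt_or_ge n (2*j+6) with h | h
      · exact Or.inr ⟨h, hn⟩
      · exact Or.inl (le_antisymm (by omega) (hg2min n hn h))
    · rintro (rfl | ⟨hr, hn⟩)
      · exact ⟨by omega, hg2T⟩
      · exact ⟨by omega, hn⟩
  have hg2nm : g₂ ∉ (range (2*j+6)).filter (· ∉ T) := by
    simp only [mem_filter, mem_range]; omega
  have hBg2c : ((range (g₂+1)).filter (· ∉ T)).card = j+4 := by
    rw [hBg2, Finset.card_insert_of_notMem hg2nm, hB6]
  have htot2 := Finset.card_filter_add_card_filter_not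
    (s := range (g₂+1)) (p := (· ∈ T))
  simp only [Finset.card_range] at htot2
  have hg2le := myL1 T hadd hg2T
  have hg2cases : g₂ = 2*j+6 ∨ g₂ = 2*j+7 := by omega
  have hg6 : 2*j+6 ∉ T := by
    rcases hg2cases with h | h
    · rwa [h] at hg2T
    · exfalso
      rw [h] at hg2T hBg2c htot2
      have heqc2 : ((range (2*j+7+1)).filter (· ∈ T)).card
          = ((range (2*j+7+1)).filter (· ∉ T)).card := by omega
      have hsurj2 := myL1' T hadd hg2T heqc2
      have h5 : 2*j+5 ∉ T := hg1T
      have := hsurj2 (2*j+5) (by omega) h5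
      have he : 2*j+7 - (2*j+5) = 2 := by omega
      rw [he] at this
      exact h2 this
  -- the chain
  have chain : ∀ k, k ≤ j → (k+3 ∉ T ∧ 2*j+2-k ∈ T) := by
    intro k
    induction k with
    | zero =>
      intro _
      have hn3 : 3 ∉ T := by
        intro hc
        have := hadd 3 hc (2*j+3) h3
        have he : 3 + (2*j+3) = 2*j+6 := by omega
        rw [he] at this
        exact hg6 this
      refine ⟨hn3, ?_⟩
      have := hsurj 3 (by omega) hn3
      have he : 2*j+5-3 = 2*j+2-0 := by omega
      rwa [he] at this
    | succ k ih =>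
      intro hk
      obtain ⟨hkA, hkB⟩ := ih (by omega)
      have hnk : k+1+3 ∉ T := by
        intro hc
        have := hadd _ hkB _ hc
        have he : 2*j+2-k + (k+1+3) = 2*j+6 := by omega
        rw [he] at this
        exact hg6 this
      refine ⟨hnk, ?_⟩
      have := hsurj (k+1+3) (by omega) hnk
      have he : 2*j+5-(k+1+3) = 2*j+2-(k+1) := by omega
      rwa [he] at this
  rcases Nat.eq_zero_or_pos j with rfl | hj
  · exact (chain 0 le_rfl).1 (by simpa using h3)
  · obtain ⟨hA, _⟩ := chain j le_rfl
    obtain ⟨_, hB2⟩ := chain (j-1) (by omega)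
    have he : 2*j+2-(j-1) = j+3 := by omega
    rw [he] at hB2
    exact hA hB2

theorem nth_lower (T : Set ℕ) (h0 : 0 ∈ T) (hadd : ∀ a ∈ T, ∀ b ∈ T, a + b ∈ T)
    (hfin : Tᶜ.Finite) {ρ : ℕ} (hρ : Tᶜ.ncard = ρ) (h1 : 1 ∉ T) (h2 : 2 ∉ T) :
    ∀ i, 1 ≤ i → i + 2 ≤ ρ → 2*i+1 ≤ Nat.nth (fun n => n ∈ T ∧ 0 < n) (i-1) := by
  classical
  have hinf := qinf T hfin
  intro i
  induction i with
  | zero => omega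
  | succ i ih =>
    intro _ hle
    by_contra hcon
    push_neg at hcon
    rcases Nat.eq_zero_or_pos i with rfl | hi
    · -- base : nth q 0 ≥ 3
      obtain ⟨hT, hpos⟩ := Nat.nth_mem_of_infinite hinf 0
      simp only [Nat.add_sub_cancel] at hcon
      have : Nat.nth (fun n => n ∈ T ∧ 0 < n) 0 = 1
          ∨ Nat.nth (fun n => n ∈ T ∧ 0 < n) 0 = 2 := by omega
      rcases this with h | h <;> rw [h] at hT
      · exact h1 hT
      · exact h2 hT
    · have hih := ih hi (by omega)
      have hmono : Nat.nth (fun n => n ∈ T ∧ 0 < n) (i-1)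
          < Nat.nth (fun n => n ∈ T ∧ 0 < n) i := by
        apply (Nat.nth_lt_nth hinf).mpr; omega
      simp only [Nat.add_sub_cancel] at hcon
      have hv2 : Nat.nth (fun n => n ∈ T ∧ 0 < n) i = 2*i+2 := by omega
      have hv1 : Nat.nth (fun n => n ∈ T ∧ 0 < n) (i-1) = 2*i+1 := by omega
      have hm2 : 2*i+2 ∈ T := by
        have := Nat.nth_mem_of_infinite hinf i; rw [hv2] at this; exact this.1
      have hm1 : 2*i+1 ∈ T := by
        have := Nat.nth_mem_of_infinite hinf (i-1); rw [hv1] at this; exact this.1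
      have hcount : Nat.count (fun n => n ∈ T ∧ 0 < n) (2*i+2) = i := by
        have := Nat.count_nth_of_infinite hinf i; rwa [hv2] at this
      have hcs := count_split T h0 (m := 2*i+2) (by omega)
      have hBcard : ((Finset.range (2*i+2)).filter (· ∉ T)).card = i+1 := by omega
      refine core T hadd hfin (i-1) ?_ ?_ ?_ h1 h2 ?_
      · have he : 2*(i-1)+3 = 2*i+1 := by omega
        rw [he]; exact hm1
      · have he : 2*(i-1)+4 = 2*i+2 := by omega
        rw [he]; exact hm2
      · have he : 2*(i-1)+4 = 2*i+2 := by omega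
        rw [he, hBcard]; omega
      · omega

open Finset in
theorem nth_two (T : Set ℕ) (h0 : 0 ∈ T) (hadd : ∀ a ∈ T, ∀ b ∈ T, a + b ∈ T)
    (hfin : Tᶜ.Finite) {ρ : ℕ} (hρ : Tᶜ.ncard = ρ) (h1 : 1 ∉ T) (h2 : 2 ∈ T) :
    ∀ i, 1 ≤ i → i ≤ ρ → Nat.nth (fun n => n ∈ T ∧ 0 < n) (i-1) = 2*i := by
  classical
  have heven : ∀ m : ℕ, 2*m ∈ T := by
    intro m
    induction m with
    | zero => simpa using h0
    | succ m ih =>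
      have := hadd _ ih _ h2
      have he : 2*m+2 = 2*(m+1) := by omega
      rwa [he] at this
  have hodne : {n | Odd n ∧ n ∈ T}.Nonempty := by
    obtain ⟨N, hN⟩ := hfin.bddAbove
    refine ⟨2*N+1, ⟨⟨N, by omega⟩, ?_⟩⟩
    by_contra hc
    have := hN (Set.mem_compl hc)
    omega
  set o := sInf {n | Odd n ∧ n ∈ T} with hodef
  have ho : Odd o ∧ o ∈ T := Nat.sInf_mem hodne
  have homin : ∀ n, Odd n → n ∈ T → o ≤ n := fun n h1 h2 => Nat.sInf_le ⟨h1, h2⟩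
  have hoddin : ∀ n, Odd n → o ≤ n → n ∈ T := by
    intro n hn hge
    obtain ⟨a, ha⟩ := hn
    obtain ⟨b, hb⟩ := ho.1
    have he : n = o + 2*(a-b) := by omega
    rw [he]
    exact hadd _ ho.2 _ (heven _)
  have hTc : Tᶜ = {n | Odd n ∧ n < o} := by
    ext n
    simp only [Set.mem_compl_iff, Set.mem_setOf_eq]
    constructor
    · intro hn
      rcases Nat.even_or_odd n with he | hod
      · exact absurd (by obtain ⟨m, hm⟩ := he; rw [show n = 2*m by omega]; exact heven m) hn
      · refine ⟨hod, ?_⟩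
        by_contra hc
        exact hn (hoddin n hod (by omega))
    · rintro ⟨hod, hlt⟩ hn
      exact absurd (homin n hod hn) (by omega)
  have oddcard : ∀ m : ℕ, ((range (2*m+1)).filter (fun n => Odd n)).card = m := by
    intro m
    induction m with
    | zero =>
      have : (range 1).filter (fun n => Odd n) = ∅ := by
        ext n
        simp only [mem_filter, mem_range, Finset.notMem_empty, iff_false, Nat.odd_iff]
        omega
      rw [show 2*0+1 = 1 from rfl, this, Finset.card_empty]
    | succ m ih =>
      have hstep : (range (2*(m+1)+1)).filter (fun n => Odd n)
          = insert (2*m+1) ((range (2*m+1)).filter (fun n => Odd n)) := by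
        ext n
        simp only [mem_filter, mem_range, mem_insert, Nat.odd_iff]
        omega
      rw [hstep, Finset.card_insert_of_notMem (by simp), ih]
  obtain ⟨c, hc⟩ := ho.1
  have hcard : Tᶜ.ncard = c := by
    rw [hTc]
    have : {n | Odd n ∧ n < o} = ↑((range o).filter (fun n => Odd n)) := by
      ext n; simp [and_comm]
    rw [this, Set.ncard_coe_finset, hc, oddcard]
  have hoval : o = 2*ρ+1 := by omega
  intro i hi1 hiρ
  have hfq : (range (2*i)).filter (fun n => n ∈ T ∧ 0 < n)
      = (range (i-1)).image (fun k => 2*k+2) := by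
    ext n
    simp only [mem_filter, mem_range, mem_image]
    constructor
    · rintro ⟨hr, hT, hpos⟩
      rcases Nat.even_or_odd n with he | hod
      · obtain ⟨m, hm⟩ := he
        exact ⟨m-1, by omega, by omega⟩
      · exact absurd (homin n hod hT) (by omega)
    · rintro ⟨k, hk, rfl⟩
      refine ⟨by omega, ?_, by omega⟩
      have := heven (k+1)
      have he : 2*(k+1) = 2*k+2 := by omega
      rwa [he] at this
  have hcount : Nat.count (fun n => n ∈ T ∧ 0 < n) (2*i) = i - 1 := by
    rw [Nat.count_eq_card_filter_range, hfq,
      Finset.card_image_of_injective _ (fun a b hab => by omega), Finset.card_range]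
  have hq2i : 2*i ∈ T ∧ 0 < 2*i := ⟨heven i, by omega⟩
  have := Nat.nth_count (p := fun n => n ∈ T ∧ 0 < n) hq2i
  rwa [hcount] at this

open Finset in
theorem transfer_nth (S : Set ℕ) (hinf : {n | 2*n ∈ S ∧ 0 < n}.Infinite) (i : ℕ) :
    Nat.nth (fun m => m ∈ S ∧ Even m ∧ 0 < m) i = 2 * Nat.nth (fun n => 2*n ∈ S ∧ 0 < n) i := by
  classical
  have hqm := Nat.nth_mem_of_infinite hinf i
  have hpm : (fun m => m ∈ S ∧ Even m ∧ 0 < m) (2 * Nat.nth (fun n => 2*n ∈ S ∧ 0 < n) i) :=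
    ⟨hqm.1, ⟨Nat.nth (fun n => 2*n ∈ S ∧ 0 < n) i, by omega⟩, by omega⟩
  have hcpq : ∀ m : ℕ, Nat.count (fun m => m ∈ S ∧ Even m ∧ 0 < m) (2*m)
      = Nat.count (fun n => 2*n ∈ S ∧ 0 < n) m := by
    intro m
    rw [Nat.count_eq_card_filter_range, Nat.count_eq_card_filter_range]
    have himg : (range (2*m)).filter (fun m => m ∈ S ∧ Even m ∧ 0 < m)
        = ((range m).filter (fun n => 2*n ∈ S ∧ 0 < n)).image (fun k => 2*k) := by
      ext n
      simp only [mem_filter, mem_range, mem_image]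
      constructor
      · rintro ⟨hr, hn, ⟨k, hk⟩, hpos⟩
        exact ⟨k, ⟨by omega, by rw [show 2*k = n by omega]; exact hn, by omega⟩, by omega⟩
      · rintro ⟨k, ⟨hr, hn, hpos⟩, rfl⟩
        exact ⟨by omega, hn, ⟨k, by omega⟩, by omega⟩
    rw [himg, Finset.card_image_of_injective _ (fun a b h => by omega)]
  have hfin := Nat.nth_count (p := fun m => m ∈ S ∧ Even m ∧ 0 < m) hpm
  rw [hcpq, Nat.count_nth_of_infinite hinf] at hfin
  exact hfin

theorem stmt_13 (S : Set ℕ) (g ρ : ℕ) (hS : IsNumSgp S) (hg : genus S = g)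
    (hρ : evenGaps S = ρ) (hρ1 : 1 ≤ ρ) :
    (evenNongap S 1 = 4 → ∀ i, 1 ≤ i → i ≤ ρ → evenNongap S i = 4 * i) ∧
    (6 ≤ evenNongap S 1 →
      (∀ i, 1 ≤ i → i ≤ ρ - 2 → 4 * i + 2 ≤ evenNongap S i) ∧
      4 * ρ - 4 ≤ evenNongap S (ρ - 1) ∧ evenNongap S ρ = 4 * ρ) ∧
    (∀ i, 1 ≤ i → evenNongap S i ≤ 2 * ρ + 2 * i) := by
  classical
  obtain ⟨h0S, haddS, hfinS⟩ := hS
  set T : Set ℕ := {n | 2*n ∈ S} with hTdef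
  have h0T : (0:ℕ) ∈ T := by
    simp only [hTdef, Set.mem_setOf_eq, Nat.mul_zero]; exact h0S
  have haddT : ∀ a ∈ T, ∀ b ∈ T, a + b ∈ T := by
    intro a ha b hb
    simp only [hTdef, Set.mem_setOf_eq] at ha hb ⊢
    have := haddS _ ha _ hb
    rwa [show 2*a+2*b = 2*(a+b) by ring] at this
  have hfinT : Tᶜ.Finite := by
    have heq : Tᶜ = (fun n => 2*n) ⁻¹' Sᶜ := rfl
    rw [heq]
    exact Set.Finite.preimage
      (Set.injOn_of_injective (fun a b h => Nat.eq_of_mul_eq_mul_left two_pos h :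
        Function.Injective fun n : ℕ => 2*n))
      hfinS
  have hρT : Tᶜ.ncard = ρ := by
    rw [← hρ]
    unfold evenGaps
    have him : {n | n ∉ S ∧ Even n} = (fun k => 2*k) '' Tᶜ := by
      ext m
      simp only [Set.mem_setOf_eq, Set.mem_image, Set.mem_compl_iff, hTdef]
      constructor
      · rintro ⟨hm, ⟨k, hk⟩⟩
        exact ⟨k, by rw [show 2*k = m by omega]; exact hm, by omega⟩
      · rintro ⟨k, hk, rfl⟩
        exact ⟨hk, ⟨k, by omega⟩⟩
    rw [him, Set.ncard_image_of_injective _ (fun a b h => by omega)]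
  have hinfq := qinf T hfinT
  have hEN : ∀ k : ℕ, Nat.nth (fun m => m ∈ S ∧ Even m ∧ 0 < m) k
      = 2 * Nat.nth (fun n => n ∈ T ∧ 0 < n) k := fun k => transfer_nth S hinfq k
  refine ⟨?_, ?_, ?_⟩
  · -- part (i)
    intro h4 i hi hiρ
    have hv : Nat.nth (fun n => n ∈ T ∧ 0 < n) 0 = 2 := by
      have := hEN 0
      unfold evenNongap at h4
      simp only [Nat.sub_self] at h4
      omega
    have h2T : (2:ℕ) ∈ T := by
      have := Nat.nth_mem_of_infinite hinfq 0
      rw [hv] at this; exact this.1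
    have h1T : (1:ℕ) ∉ T := by
      intro hc
      have hle : Nat.nth (fun n => n ∈ T ∧ 0 < n) 0 ≤ 1 := by
        rw [Nat.nth_zero]
        exact Nat.sInf_le ⟨hc, by omega⟩
      omega
    unfold evenNongap
    rw [hEN (i-1), nth_two T h0T haddT hfinT hρT h1T h2T i hi hiρ]
    ring
  · -- part (ii)
    intro h6
    have hv : 3 ≤ Nat.nth (fun n => n ∈ T ∧ 0 < n) 0 := by
      have := hEN 0
      unfold evenNongap at h6
      simp only [Nat.sub_self] at h6
      omega
    have hsmall : ∀ k : ℕ, 0 < k → k < 3 → k ∉ T := by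
      intro k hk1 hk2 hc
      have hle : Nat.nth (fun n => n ∈ T ∧ 0 < n) 0 ≤ k := by
        rw [Nat.nth_zero]
        exact Nat.sInf_le ⟨hc, hk1⟩
      omega
    have h1T : (1:ℕ) ∉ T := hsmall 1 (by omega) (by omega)
    have h2T : (2:ℕ) ∉ T := hsmall 2 (by omega) (by omega)
    refine ⟨?_, ?_, ?_⟩
    · intro i hi hile
      have hle : i + 2 ≤ ρ := by omega
      unfold evenNongap
      rw [hEN (i-1)]
      have := nth_lower T h0T haddT hfinT hρT h1T h2T i hi hle
      omega
    · rcases Nat.lt_or_ge ρ 2 with h | h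
      · have : ρ = 1 := by omega
        rw [this]
        simp
      · unfold evenNongap
        rw [show ρ - 1 - 1 = ρ - 2 by omega, hEN (ρ-2)]
        have := nth_penult T h0T haddT hfinT hρT h h1T
        omega
    · unfold evenNongap
      rw [hEN (ρ-1), nth_last T h0T haddT hfinT hρT hρ1]
      ring
  · -- part (iii)
    intro i hi
    unfold evenNongap
    rw [hEN (i-1)]
    have := nth_upper T h0T hfinT hρT i hi
    omega
end

section
/- Let H be a numerical semigroup of genus g with ρ ≥ 1 even gaps, and let u_ρ < ... < u₁ be the ρ odd non-gaps of H in [1, 2g−1]. Then 2g − 4j + 1 ≤ u_j ≤ 2g − 2j + 1 for j = 1,...,ρ. -/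
/-- `u S ρ j` is the odd non-gap `u_j`, where `u_ρ < ... < u_1` are the odd
elements of `S` in increasing order (so `u_j` is the `(ρ-j+1)`-th smallest
odd element of `S`). -/
noncomputable def oddNongapU (S : Set ℕ) (ρ j : ℕ) : ℕ :=
  Nat.nth (fun n => n ∈ S ∧ Odd n) (ρ - j)

theorem stmt_14 (S : Set ℕ) (g ρ : ℕ) (hS : IsNumSgp S) (hg : genus S = g)
    (hρ : evenGaps S = ρ) (hρ1 : 1 ≤ ρ) :
    ∀ j, 1 ≤ j → j ≤ ρ →
      (2 * (g : ℤ) - 4 * j + 1 ≤ oddNongapU S ρ j ∧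
       (oddNongapU S ρ j : ℤ) ≤ 2 * g - 2 * j + 1) := by
  classical
  obtain ⟨h0, hadd, hfin⟩ := hS
  set P : ℕ → Prop := fun n => n ∈ S ∧ Odd n with hPdef
  set G : Finset ℕ := hfin.toFinset with hGdef
  have hGmem : ∀ n, n ∈ G ↔ n ∉ S := by
    intro n; simp [hGdef, Set.Finite.mem_toFinset]
  have hGcard : G.card = g := by
    rw [← hg]; unfold genus
    rw [Set.ncard_eq_toFinset_card _ hfin]
  -- all gaps are < 2 * g
  have hgap : ∀ n, n ∉ S → n < 2 * g := by
    intro n hn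
    set A := (Finset.range (n+1)).filter (· ∈ S) with hA
    set B := (Finset.range (n+1)).filter (· ∉ S) with hB
    have hAB : A.card ≤ B.card := by
      apply Finset.card_le_card_of_injOn (fun x => n - x)
      · intro x hx
        simp only [hA, Finset.mem_coe, Finset.mem_filter, Finset.mem_range] at hx
        simp only [hB, Finset.mem_coe, Finset.mem_filter, Finset.mem_range]
        constructor
        · omega
        · intro hmem
          have := hadd x hx.2 (n - x) hmem
          have hxn : x ≤ n := by omega
          rw [Nat.add_sub_cancel' hxn] at this
          exact hn this
      · intro x hx y hy hxy
        simp only [hA, Finset.mem_coe, Finset.mem_filter, Finset.mem_range] at hx hy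
        have hxy' : n - x = n - y := hxy
        omega
    have hsum : A.card + B.card = n + 1 := by
      have hun : A ∪ B = Finset.range (n+1) := by
        ext x
        simp only [hA, hB, Finset.mem_union, Finset.mem_filter]
        tauto
      have hd : Disjoint A B := by
        rw [Finset.disjoint_left]
        intro x h1 h2
        simp only [hA, hB, Finset.mem_filter] at h1 h2
        exact h2.2 h1.2
      rw [← Finset.card_union_of_disjoint hd, hun, Finset.card_range]
    have hBG : B ⊆ G := by
      intro x hx
      simp only [hB, Finset.mem_filter, Finset.mem_range] at hx
      exact (hGmem x).2 hx.2
    have := Finset.card_le_card hBG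
    omega
  -- even gaps finset
  set E : Finset ℕ := G.filter (fun n => Even n) with hEdef
  have hEcard : E.card = ρ := by
    rw [← hρ]; unfold evenGaps
    have : {n | n ∉ S ∧ Even n} = ↑E := by
      ext n; simp [hEdef, hGmem n]
    rw [this, Set.ncard_coe_finset]
  -- odd gaps
  set OG : Finset ℕ := G.filter (fun n => Odd n) with hOGdef
  have hOGcard : ρ + OG.card = g := by
    have hun : E ∪ OG = G := by
      ext n
      simp only [hEdef, hOGdef, Finset.mem_union, Finset.mem_filter]
      constructor
      · rintro (⟨h, _⟩ | ⟨h, _⟩) <;> exact h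
      · intro h
        rcases Nat.even_or_odd n with he | ho
        · exact Or.inl ⟨h, he⟩
        · exact Or.inr ⟨h, ho⟩
    have hd : Disjoint E OG := by
      rw [Finset.disjoint_left]
      intro n h1 h2
      simp only [hEdef, hOGdef, Finset.mem_filter] at h1 h2
      exact (Nat.not_even_iff_odd.mpr h2.2) h1.2
    have := Finset.card_union_of_disjoint hd
    rw [hun, hGcard, hEcard] at this
    omega
  -- odd elements form an infinite set
  have hinf : (setOf P).Infinite := by
    apply Set.infinite_of_injective_forall_mem (f := fun k : ℕ => 2 * g + 2 * k + 1)
    · intro a b hab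
      have hab' : 2 * g + 2 * a + 1 = 2 * g + 2 * b + 1 := hab
      omega
    · intro k
      show (2 * g + 2 * k + 1) ∈ S ∧ Odd (2 * g + 2 * k + 1)
      refine ⟨?_, ⟨g + k, by ring⟩⟩
      by_contra hmem
      have := hgap _ hmem
      omega
  -- count of odd elements below 2g is ρ
  have hcount2g : Nat.count P (2 * g) = ρ := by
    set Odds := (Finset.range (2*g)).filter (fun n => Odd n) with hOdds
    have hOddsCard : Odds.card = g := by
      have himg : Odds = (Finset.range g).image (fun k => 2*k+1) := by
        ext n
        simp only [hOdds, Finset.mem_filter, Finset.mem_range, Finset.mem_image,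
          Nat.odd_iff]
        constructor
        · rintro ⟨h1, h2⟩; exact ⟨n / 2, by omega, by omega⟩
        · rintro ⟨k, hk, rfl⟩; omega
      rw [himg, Finset.card_image_of_injective _ (fun a b h => by omega),
        Finset.card_range]
    have hun : ((Finset.range (2*g)).filter (fun x => P x)) ∪ OG = Odds := by
      ext n
      simp only [hOdds, hOGdef, Finset.mem_union, Finset.mem_filter,
        Finset.mem_range, hGmem n, hPdef]
      constructor
      · rintro (⟨h1, _, h3⟩ | ⟨h1, h2⟩)
        · exact ⟨h1, h3⟩
        · exact ⟨hgap n h1, h2⟩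
      · rintro ⟨h1, h2⟩
        by_cases hnS : n ∈ S
        · exact Or.inl ⟨h1, hnS, h2⟩
        · exact Or.inr ⟨hnS, h2⟩
    have hd : Disjoint ((Finset.range (2*g)).filter (fun x => P x)) OG := by
      rw [Finset.disjoint_left]
      intro n h1 h2
      simp only [Finset.mem_filter, hPdef] at h1
      simp only [hOGdef, Finset.mem_filter, hGmem n] at h2
      exact h2.1 h1.2.1
    have hcu := Finset.card_union_of_disjoint hd
    rw [hun, hOddsCard] at hcu
    rw [Nat.count_eq_card_filter_range]
    omega
  intro j hj1 hj2
  have hueq : oddNongapU S ρ j = Nat.nth P (ρ - j) := rfl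
  set u : ℕ := Nat.nth P (ρ - j) with hu
  rw [hueq]
  have hu_mem : P u := Nat.nth_mem_of_infinite hinf _
  have hu2 : u % 2 = 1 := Nat.odd_iff.mp hu_mem.2
  have hcu : Nat.count P u = ρ - j := Nat.count_nth_of_infinite hinf _
  have hu_lt : u < 2 * g := by
    by_contra hle
    have := Nat.count_monotone P (le_of_not_gt hle)
    omega
  -- split the count over [0,u) and [u, 2g)
  have hsplit : Nat.count P (2*g) = Nat.count P u + ((Finset.Ico u (2*g)).filter (fun x => P x)).card := by
    have hun : ((Finset.range u).filter (fun x => P x)) ∪ ((Finset.Ico u (2*g)).filter (fun x => P x))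
        = (Finset.range (2*g)).filter (fun x => P x) := by
      ext n
      simp only [Finset.mem_union, Finset.mem_filter, Finset.mem_range, Finset.mem_Ico]
      constructor
      · rintro (⟨h1, h2⟩ | ⟨⟨h1, h1'⟩, h2⟩)
        · exact ⟨by omega, h2⟩
        · exact ⟨h1', h2⟩
      · rintro ⟨h1, h2⟩
        rcases lt_or_ge n u with h | h
        · exact Or.inl ⟨h, h2⟩
        · exact Or.inr ⟨⟨h, h1⟩, h2⟩
    have hd : Disjoint ((Finset.range u).filter (fun x => P x)) ((Finset.Ico u (2*g)).filter (fun x => P x)) := by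
      rw [Finset.disjoint_left]
      intro n h1 h2
      simp only [Finset.mem_filter, Finset.mem_range, Finset.mem_Ico] at h1 h2
      omega
    have hcards := Finset.card_union_of_disjoint hd
    rw [hun] at hcards
    rw [Nat.count_eq_card_filter_range, Nat.count_eq_card_filter_range]
    omega
  have hjcard : ((Finset.Ico u (2*g)).filter (fun x => P x)).card = j := by omega
  -- number of odd numbers in [u, 2g)
  set m : ℕ := (2*g + 1 - u)/2 with hm
  set OddsIco := (Finset.Ico u (2*g)).filter (fun n => Odd n) with hOI
  have hOIcard : OddsIco.card = m := by
    rw [← Finset.card_range m]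
    apply Finset.card_nbij' (fun a => (a - u)/2) (fun k => u + 2*k)
    · intro a ha
      simp only [hOI, Finset.mem_coe, Finset.mem_filter, Finset.mem_Ico, Nat.odd_iff] at ha
      simp only [Finset.mem_coe, Finset.mem_range, hm]
      omega
    · intro k hk
      simp only [Finset.mem_coe, Finset.mem_range, hm] at hk
      simp only [hOI, Finset.mem_coe, Finset.mem_filter, Finset.mem_Ico, Nat.odd_iff]
      omega
    · intro a ha
      simp only [hOI, Finset.mem_coe, Finset.mem_filter, Finset.mem_Ico, Nat.odd_iff] at ha
      show u + 2 * ((a - u) / 2) = a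
      omega
    · intro k hk
      show (u + 2 * k - u) / 2 = k
      omega
  have hmu : 2 * m = 2 * g + 1 - u := by omega
  -- odd gaps in [u, 2g)
  set T := (Finset.Ico u (2*g)).filter (fun n => n ∉ S ∧ Odd n) with hT
  set t : ℕ := T.card with ht
  have hmjt : m = j + t := by
    have hun : ((Finset.Ico u (2*g)).filter (fun x => P x)) ∪ T = OddsIco := by
      ext n
      simp only [hOI, hT, Finset.mem_union, Finset.mem_filter, Finset.mem_Ico, hPdef]
      constructor
      · rintro (⟨h1, h2, h3⟩ | ⟨h1, h2, h3⟩)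
        · exact ⟨h1, h3⟩
        · exact ⟨h1, h3⟩
      · rintro ⟨h1, h2⟩
        by_cases hnS : n ∈ S
        · exact Or.inl ⟨h1, hnS, h2⟩
        · exact Or.inr ⟨h1, hnS, h2⟩
    have hd : Disjoint ((Finset.Ico u (2*g)).filter (fun x => P x)) T := by
      rw [Finset.disjoint_left]
      intro n h1 h2
      simp only [hT, Finset.mem_filter, hPdef] at h1 h2
      exact h2.2.1 h1.2.1
    have hcards := Finset.card_union_of_disjoint hd
    rw [hun, hOIcard, hjcard] at hcards
    omega
  -- key claim : t ≤ j
  have htj : t ≤ j := by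
    rcases T.eq_empty_or_nonempty with hTe | hTne
    · have : t = 0 := by rw [ht, hTe, Finset.card_empty]
      omega
    · set a0 := T.max' hTne with ha0
      have ha0T : a0 ∈ T := T.max'_mem hTne
      simp only [hT, Finset.mem_filter, Finset.mem_Ico] at ha0T
      obtain ⟨⟨ha0u, ha0lt⟩, ha0S, ha0odd⟩ := ha0T
      have ha02 : a0 % 2 = 1 := Nat.odd_iff.mp ha0odd
      set B := (Finset.range (u+1)).filter (fun x => P x) with hB
      have hBcard : B.card = ρ - j + 1 := by
        have hc1 : Nat.count P (u+1) = ρ - j + 1 := by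
          rw [Nat.count_succ, hcu, if_pos hu_mem]
        rw [← hc1, Nat.count_eq_card_filter_range]
      set D1 := B.image (fun b => a0 - b) with hD1
      set D2 := (T.erase a0).image (fun a => a - u) with hD2
      have hBmem : ∀ b ∈ B, b ∈ S ∧ b % 2 = 1 ∧ b ≤ u := by
        intro b hb
        simp only [hB, Finset.mem_filter, Finset.mem_range, hPdef] at hb
        exact ⟨hb.2.1, Nat.odd_iff.mp hb.2.2, by omega⟩
      have hTmem : ∀ a ∈ T.erase a0, a ∉ S ∧ a % 2 = 1 ∧ u ≤ a ∧ a < a0 := by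
        intro a hamem
        have hane := Finset.ne_of_mem_erase hamem
        have haT := Finset.mem_of_mem_erase hamem
        have hale := T.le_max' a haT
        simp only [hT, Finset.mem_filter, Finset.mem_Ico] at haT
        exact ⟨haT.2.1, Nat.odd_iff.mp haT.2.2, haT.1.1, by omega⟩
      have hD1card : D1.card = ρ - j + 1 := by
        rw [hD1, Finset.card_image_of_injOn, hBcard]
        intro b hb c hc hbc
        have h1 := hBmem b hb; have h2 := hBmem c hc
        have hbc' : a0 - b = a0 - c := hbc
        omega
      have hD2card : D2.card = t - 1 := by
        rw [hD2, Finset.card_image_of_injOn, Finset.card_erase_of_mem (T.max'_mem hTne), ht]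
        intro a haa b hbb hab
        have h1 := hTmem a haa; have h2 := hTmem b hbb
        have hab' : a - u = b - u := hab
        omega
      have hsubE : D1 ∪ D2 ⊆ E := by
        intro x hx
        rw [Finset.mem_union] at hx
        have hxgap : x ∉ S ∧ Even x := by
          rcases hx with hx | hx
          · obtain ⟨b, hb, hbe⟩ := Finset.mem_image.mp hx
            have hbe' : a0 - b = x := hbe
            subst hbe'
            obtain ⟨hbS, hb2, hbu⟩ := hBmem b hb
            constructor
            · intro hmem
              have := hadd b hbS _ hmem
              rw [Nat.add_sub_cancel' (by omega : b ≤ a0)] at this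
              exact ha0S this
            · rw [Nat.even_sub (by omega : b ≤ a0)]
              simp only [Nat.even_iff]
              omega
          · obtain ⟨a, haa, hae⟩ := Finset.mem_image.mp hx
            have hae' : a - u = x := hae
            subst hae'
            obtain ⟨haS, ha2, hau, halt⟩ := hTmem a haa
            constructor
            · intro hmem
              have := hadd u hu_mem.1 _ hmem
              rw [Nat.add_sub_cancel' hau] at this
              exact haS this
            · rw [Nat.even_sub hau]
              simp only [Nat.even_iff]
              omega
        simp only [hEdef, Finset.mem_filter, hGmem x]
        exact ⟨hxgap.1, hxgap.2⟩
      have hdisj : Disjoint D1 D2 := by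
        rw [Finset.disjoint_left]
        intro x hx1 hx2
        obtain ⟨b, hb, hbe⟩ := Finset.mem_image.mp hx1
        obtain ⟨a, haa, hae⟩ := Finset.mem_image.mp hx2
        have h1 := hBmem b hb
        have h2 := hTmem a haa
        have hbe' : a0 - b = x := hbe
        have hae' : a - u = x := hae
        omega
      have hcardle : D1.card + D2.card ≤ ρ := by
        rw [← Finset.card_union_of_disjoint hdisj, ← hEcard]
        exact Finset.card_le_card hsubE
      have htpos : 1 ≤ t := Finset.card_pos.mpr hTne
      omega
  refine ⟨?_, ?_⟩ <;> omega
end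

section
/- Let H be a numerical semigroup of genus g with ρ even gaps, and suppose g ≤ 2ρ − 1. Then w(H) ≤ C(g+2ρ, 2) − 4g − 6ρ² + 8ρ. -/
/-- Greedy bound function: max possible sum of `p` distinct elements of `[1,M]`
whose i-th smallest is `≤ 2i-1`. -/
def fbd : ℕ → ℕ → ℕ
  | 0, _ => 0
  | p+1, M => min (2*p+1) M + fbd p (min (2*p+1) M - 1)

lemma fbd_mono : ∀ p : ℕ, ∀ {M M' : ℕ}, M ≤ M' → fbd p M ≤ fbd p M'
  | 0, _, _, _ => le_rfl
  | p+1, M, M', h => by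
      simp only [fbd]
      have h1 : min (2*p+1) M ≤ min (2*p+1) M' := min_le_min le_rfl h
      exact Nat.add_le_add h1 (fbd_mono p (by omega))

lemma fbd_le_sq : ∀ p M : ℕ, fbd p M ≤ p^2
  | 0, _ => by simp [fbd]
  | p+1, M => by
      simp only [fbd]
      have h1 : min (2*p+1) M ≤ 2*p+1 := min_le_left _ _
      have h2 : fbd p (min (2*p+1) M - 1) ≤ p^2 := fbd_le_sq p _
      nlinarith

lemma fbd_bound : ∀ p M : ℕ, p ≤ M → M + 1 ≤ 2*p →
    2*(fbd p M : ℤ) ≤ 2*((M:ℤ)-p+1)^2 + M*(M+1) - (2*((M:ℤ)-p)+1)*(2*((M:ℤ)-p)+2)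
  | 0, M, hpM, hM => by omega
  | p+1, M, hpM, hM => by
      rcases le_or_gt (2*p+1) M with hc | hc
      · -- then M = 2p+1
        have hM' : M = 2*p+1 := by omega
        subst hM'
        have : fbd (p+1) (2*p+1) = (2*p+1) + fbd p (2*p) := by
          simp only [fbd]; rw [min_eq_left (le_refl _)]; congr 1
        rw [this]
        have h2 : fbd p (2*p) ≤ p^2 := fbd_le_sq p _
        push_cast
        nlinarith
      · have : fbd (p+1) M = M + fbd p (M-1) := by
          simp only [fbd]; rw [min_eq_right (by omega)]
        rw [this]
        have hM1 : (1:ℕ) ≤ M := by omega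
        have ih := fbd_bound p (M-1) (by omega) (by omega)
        have hcast : ((M - 1 : ℕ) : ℤ) = (M:ℤ) - 1 := by omega
        rw [hcast] at ih
        push_cast
        nlinarith

/-- Pair-counting: if for every `x ∈ [t, n/2]` either `x` or `n - x` lies in `X`,
then `X` has at least `n/2 + 1 - t` elements `≤ n`. -/
lemma pair_count (X : Finset ℕ) (t n : ℕ)
    (hpair : ∀ x, t ≤ x → 2*x ≤ n → (x ∈ X ∨ (n-x) ∈ X)) :
    n/2 + 1 ≤ (X.filter (· ≤ n)).card + t := by
  have hinj : ∀ x ∈ Finset.Icc t (n/2), (if x ∈ X then x else n - x) ∈ X.filter (· ≤ n) := by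
    intro x hx
    simp only [Finset.mem_Icc] at hx
    have h2x : 2*x ≤ n := by
      have := Nat.le_div_iff_mul_le (k := 2) (by norm_num) |>.mp hx.2
      omega
    by_cases hxX : x ∈ X
    · simp only [Finset.mem_filter]
      refine ⟨by simp [hxX], ?_⟩
      simp only [hxX, if_true]
      omega
    · rcases hpair x hx.1 h2x with h | h
      · exact absurd h hxX
      · simp only [Finset.mem_filter]
        simp only [hxX, if_false]
        exact ⟨h, by omega⟩
  have hcard : (Finset.Icc t (n/2)).card ≤ (X.filter (· ≤ n)).card := by
    apply Finset.card_le_card_of_injOn _ hinj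
    intro x hx y hy hxy
    simp only [Finset.coe_Icc, Set.mem_Icc] at hx hy
    have h2x : 2*x ≤ n := by
      have := Nat.le_div_iff_mul_le (k := 2) (by norm_num) |>.mp hx.2
      omega
    have h2y : 2*y ≤ n := by
      have := Nat.le_div_iff_mul_le (k := 2) (by norm_num) |>.mp hy.2
      omega
    by_cases hxX : x ∈ X <;> by_cases hyX : y ∈ X <;> simp [hxX, hyX] at hxy <;> omega
  rw [Nat.card_Icc] at hcard
  omega

lemma fbd_zero (M : ℕ) : fbd 0 M = 0 := rfl

lemma fbd_def (p M : ℕ) : fbd (p+1) M = min (2*p+1) M + fbd p (min (2*p+1) M - 1) := rfl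

/-- Sum bound for a "pair-closed" set of positive integers bounded by `M`. -/
lemma sumA_le : ∀ (p : ℕ) (A : Finset ℕ) (M : ℕ), A.card = p →
    (∀ a ∈ A, 1 ≤ a) → (∀ a ∈ A, a ≤ M) →
    (∀ a ∈ A, ∀ x, x ≤ a → (x ∈ A ∨ a - x ∈ A)) →
    ∑ a ∈ A, a ≤ fbd p M
  | 0, A, M, hcard, _, _, _ => by
      rw [Finset.card_eq_zero] at hcard; subst hcard; simp [fbd_zero]
  | p+1, A, M, hcard, hpos, hle, hpair => by
      have hne : A.Nonempty := Finset.card_pos.mp (by omega)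
      obtain ⟨m, hmA, hmax⟩ : ∃ m ∈ A, ∀ a ∈ A, a ≤ m :=
        ⟨A.max' hne, A.max'_mem hne, fun a ha => A.le_max' a ha⟩
      -- m ≤ 2p+1
      have hcnt := pair_count A 0 m (fun x _ hx => hpair m hmA x (by omega))
      have hfilt : A.filter (· ≤ m) = A := by
        apply Finset.filter_true_of_mem; intro a ha; exact hmax a ha
      rw [hfilt, hcard] at hcnt
      have hm2 : m ≤ 2*p+1 := by omega
      -- erase
      set A' := A.erase m with hA'
      have hcard' : A'.card = p := by
        rw [hA', Finset.card_erase_of_mem hmA, hcard]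
        omega
      have hsub : ∀ a ∈ A', a ∈ A := fun a ha => Finset.mem_of_mem_erase ha
      have hlt : ∀ a ∈ A', a ≤ m - 1 := by
        intro a ha
        have h1 := hmax a (hsub a ha)
        have h2 := Finset.ne_of_mem_erase ha
        omega
      have hm1 : 1 ≤ m := hpos m hmA
      have hpair' : ∀ a ∈ A', ∀ x, x ≤ a → (x ∈ A' ∨ a - x ∈ A') := by
        intro a ha x hx
        rcases hpair a (hsub a ha) x hx with h | h
        · left; rw [hA', Finset.mem_erase]
          exact ⟨by have := hlt a ha; omega, h⟩
        · right; rw [hA', Finset.mem_erase]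
          exact ⟨by have := hlt a ha; omega, h⟩
      have ih := sumA_le p A' (m-1) hcard' (fun a ha => hpos a (hsub a ha)) hlt hpair'
      have hsum : ∑ a ∈ A, a = m + ∑ a ∈ A', a :=
        (Finset.add_sum_erase A (fun x => x) hmA).symm
      rw [hsum, fbd_def]
      have hmm : m ≤ min (2*p+1) M := le_min hm2 (hle m hmA)
      have : fbd p (m-1) ≤ fbd p (min (2*p+1) M - 1) := fbd_mono p (by omega)
      omega

/-- Counting for C: if `z ∈ C` and `C` is closed under subtracting non-`A` elements. -/
lemma count_CA (A C : Finset ℕ) (z : ℕ) (hsub : ∀ s, s ≤ z → s ∉ A → z - s ∈ C) :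
    z + 1 ≤ (C.filter (· ≤ z)).card + (A.filter (· ≤ z)).card := by
  classical
  have hinj : ((Finset.range (z+1)).filter (· ∉ A)).card ≤ (C.filter (· ≤ z)).card := by
    apply Finset.card_le_card_of_injOn (fun s => z - s)
    · intro s hs
      simp only [Finset.mem_coe, Finset.mem_filter, Finset.mem_range] at hs
      simp only [Finset.mem_coe, Finset.mem_filter]
      exact ⟨hsub s (by omega) hs.2, by omega⟩
    · intro x hx y hy hxy
      simp only [Finset.coe_filter, Finset.mem_range, Set.mem_setOf_eq] at hx hy
      simp only at hxy
      omega
  have hsplit : ((Finset.range (z+1)).filter (· ∈ A)).card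
      + ((Finset.range (z+1)).filter (· ∉ A)).card = z + 1 := by
    rw [Finset.card_filter_add_card_filter_not, Finset.card_range]
  have hAsub : ((Finset.range (z+1)).filter (· ∈ A)).card ≤ (A.filter (· ≤ z)).card := by
    apply Finset.card_le_card
    intro x hx
    simp only [Finset.mem_filter, Finset.mem_range] at hx ⊢
    exact ⟨hx.2, by omega⟩
  omega


/-- Closed-form bound for the "high" contributions. -/
def RHSpoly (t ρ h q : ℤ) : ℤ :=
  (2*t+2*ρ-2)*h + h*(h+1) + q*(4*t-2*ρ) + 3*q*(2*h-q+1)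

lemma sumDW : ∀ (h : ℕ) (D W : Finset ℕ) (t ρ : ℕ), D.card = h → W ⊆ D →
    (∀ z ∈ D, (z:ℤ) ≤ t + ((D.filter (· ≤ z)).card : ℤ) - 1 + ρ) →
    (∀ z ∈ W, (z:ℤ) ≤ t + 2*((D.filter (· ≤ z)).card : ℤ) - 1) →
    ((∑ z ∈ D, 2*(z:ℤ)) + (∑ z ∈ W, (2*(z:ℤ) + 2*t + 2)))
      ≤ RHSpoly t ρ h W.card
  | 0, D, W, t, ρ, hcard, hWD, _, _ => by
      rw [Finset.card_eq_zero] at hcard; subst hcard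
      rw [Finset.subset_empty] at hWD; subst hWD
      simp [RHSpoly]
  | h+1, D, W, t, ρ, hcard, hWD, ha, hb => by
      classical
      have hne : D.Nonempty := Finset.card_pos.mp (by omega)
      obtain ⟨z₀, hz₀D, hmax⟩ : ∃ m ∈ D, ∀ a ∈ D, a ≤ m :=
        ⟨D.max' hne, D.max'_mem hne, fun a ha => D.le_max' a ha⟩
      have hfiltD : D.filter (· ≤ z₀) = D :=
        Finset.filter_true_of_mem (fun a ha => hmax a ha)
      set D' := D.erase z₀ with hD'
      have hcardD' : D'.card = h := by
        rw [hD', Finset.card_erase_of_mem hz₀D, hcard]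
        omega
      have hsubD : ∀ a ∈ D', a ∈ D := fun a ha => Finset.mem_of_mem_erase ha
      have hltD : ∀ a ∈ D', a < z₀ := by
        intro a ha
        have h1 := hmax a (hsubD a ha)
        have h2 := Finset.ne_of_mem_erase ha
        omega
      -- filters agree on D' elements
      have hfilt' : ∀ z ∈ D', D'.filter (· ≤ z) = D.filter (· ≤ z) := by
        intro z hz
        rw [hD', Finset.filter_erase]
        apply Finset.erase_eq_of_notMem
        simp only [Finset.mem_filter]
        rintro ⟨-, hle⟩
        exact absurd hle (by have := hltD z hz; omega)
      have ha' : ∀ z ∈ D', (z:ℤ) ≤ t + ((D'.filter (· ≤ z)).card : ℤ) - 1 + ρ := by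
        intro z hz; rw [hfilt' z hz]; exact ha z (hsubD z hz)
      have hsumD : (∑ z ∈ D, 2*(z:ℤ)) = 2*z₀ + ∑ z ∈ D', 2*(z:ℤ) :=
        (Finset.add_sum_erase D (fun z => 2*(z:ℤ)) hz₀D).symm
      -- bound for z₀ via (a)
      have haz₀ := ha z₀ hz₀D
      rw [hfiltD, hcard] at haz₀
      by_cases hz₀W : z₀ ∈ W
      · -- z₀ ∈ W
        set W' := W.erase z₀ with hW'
        have hq : W.card = W'.card + 1 := by
          rw [hW', Finset.card_erase_of_mem hz₀W]
          have : 1 ≤ W.card := Finset.card_pos.mpr ⟨z₀, hz₀W⟩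
          omega
        have hW'D' : W' ⊆ D' := by
          intro x hx
          rw [hW', Finset.mem_erase] at hx
          rw [hD', Finset.mem_erase]
          exact ⟨hx.1, hWD hx.2⟩
        have hb' : ∀ z ∈ W', (z:ℤ) ≤ t + 2*((D'.filter (· ≤ z)).card : ℤ) - 1 := by
          intro z hz
          rw [hfilt' z (hW'D' hz)]
          exact hb z (Finset.mem_of_mem_erase hz)
        have ih := sumDW h D' W' t ρ hcardD' hW'D' ha' hb'
        have hbz₀ := hb z₀ hz₀W
        rw [hfiltD, hcard] at hbz₀
        have hsumW : (∑ z ∈ W, (2*(z:ℤ) + 2*t + 2))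
            = (2*(z₀:ℤ) + 2*t + 2) + ∑ z ∈ W', (2*(z:ℤ) + 2*t + 2) :=
          (Finset.add_sum_erase W (fun z => 2*(z:ℤ) + 2*t + 2) hz₀W).symm
        rw [hsumD, hsumW, hq]
        have hq0 : (0:ℤ) ≤ (W'.card : ℤ) := Int.natCast_nonneg _
        simp only [RHSpoly] at ih ⊢
        push_cast
        push_cast at ih hbz₀ haz₀
        nlinarith [ih, hbz₀]
      · -- z₀ ∉ W
        have hWD' : W ⊆ D' := by
          intro x hx
          rw [hD', Finset.mem_erase]
          exact ⟨fun hxz => hz₀W (hxz ▸ hx), hWD hx⟩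
        have hb' : ∀ z ∈ W, (z:ℤ) ≤ t + 2*((D'.filter (· ≤ z)).card : ℤ) - 1 := by
          intro z hz
          rw [hfilt' z (hWD' hz)]
          exact hb z hz
        have ih := sumDW h D' W t ρ hcardD' hWD' ha' hb'
        rw [hsumD]
        have hq0 : (0:ℤ) ≤ (W.card : ℤ) := Int.natCast_nonneg _
        simp only [RHSpoly] at ih ⊢
        push_cast
        push_cast at ih haz₀
        nlinarith [ih, haz₀]

lemma final_alg (t hD p q u ρ : ℕ) (fv : ℤ) (hpt1 : t + 1 ≤ p) (hp2t : p ≤ 2*t)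
    (hqD : q ≤ hD) (htu : t + hD = u) (hpq : p + q = ρ) (hu_le : u + 1 ≤ ρ)
    (hfb : 2*fv ≤ 2*((2*(t:ℤ))-p+1)^2 + (2*(t:ℤ))*(2*(t:ℤ)+1)
      - (2*((2*(t:ℤ))-p)+1)*(2*((2*(t:ℤ))-p)+2)) :
    2*fv + t*((t:ℤ)-1) + RHSpoly t ρ hD q
      ≤ (u:ℤ)^2 + 4*ρ*u - ρ^2 - 5*u + 3*ρ := by
  have hm : (0:ℤ) ≤ 2*(t:ℤ) - p := by push_cast; omega
  have hn : (0:ℤ) ≤ (hD:ℤ) - q := by push_cast; omega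
  have he : (0:ℤ) ≤ (ρ:ℤ) - 1 - u := by push_cast; omega
  have hq0 : (0:ℤ) ≤ (q:ℤ) := Int.natCast_nonneg _
  have hmm : (0:ℤ) ≤ (2*(t:ℤ) - p) * (2*(t:ℤ) - p - 1) := by
    rcases le_or_gt ((2:ℤ)*t - p) 0 with h1 | h1
    · nlinarith
    · have : (1:ℤ) ≤ 2*(t:ℤ) - p := h1
      nlinarith
  have hsubst : (u:ℤ) = t + hD := by push_cast; omega
  have hsubst2 : (ρ:ℤ) = p + q := by push_cast; omega
  simp only [RHSpoly]
  nlinarith [hfb, hmm, mul_nonneg hn hn, mul_nonneg he hn, mul_nonneg hm hn,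
    mul_nonneg hq0 he, mul_nonneg hq0 hm, hsubst, hsubst2]

lemma fincomb (SA SC T : ℤ) (u ρ g : ℕ)
    (h1 : 2*SA + 2*SC ≤ (u:ℤ)^2+4*ρ*u-ρ^2-5*u+3*ρ)
    (h2 : 2*T = g*((g:ℤ)+1)) (h3 : (g:ℤ) = ρ + u) :
    2*((2*SA + 2*SC + u) - T) ≤ ((g:ℤ)+2*ρ)*((g:ℤ)+2*ρ-1) - 8*g - 12*(ρ:ℤ)^2 + 16*ρ := by
  nlinarith [h1, h2, h3]

theorem stmt_17 (S : Set ℕ) (g ρ : ℕ) (hS : IsNumSgp S) (hg : genus S = g)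
    (hρ : evenGaps S = ρ) (h : g ≤ 2 * ρ - 1) (hρ1 : 1 ≤ ρ) :
    (weight S : ℤ) ≤ ((g + 2 * ρ).choose 2 : ℤ) - 4 * g - 6 * ρ ^ 2 + 8 * ρ := by
  classical
  obtain ⟨h0, hadd, hfin⟩ := hS
  set L := hfin.toFinset with hLdef
  have hmemL : ∀ n, n ∈ L ↔ n ∉ S := fun n => by
    rw [hLdef, Set.Finite.mem_toFinset]; rfl
  have hgL : L.card = g := by
    rw [← hg]; unfold genus
    rw [Set.ncard_eq_toFinset_card _ hfin]
  -- 1 is a gap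
  have hone : (1:ℕ) ∉ S := by
    intro h1
    have hall : ∀ n, n ∈ S := by
      intro n; induction n with
      | zero => exact h0
      | succ k ih => exact hadd k ih 1 h1
    have : evenGaps S = 0 := by
      unfold evenGaps
      have : {n : ℕ | n ∉ S ∧ Even n} = ∅ := by
        ext n; simp [hall n]
      rw [this, Set.ncard_empty]
    omega
  -- A and C
  set A := (L.filter (fun n => Even n)).image (· / 2) with hAdef
  set C := (L.filter (fun n => ¬ Even n)).image (· / 2) with hCdef
  have hmemA : ∀ a, a ∈ A ↔ 2*a ∉ S := by
    intro a
    rw [hAdef, Finset.mem_image]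
    constructor
    · rintro ⟨n, hn, rfl⟩
      rw [Finset.mem_filter, hmemL] at hn
      obtain ⟨k, hk⟩ := hn.2
      have : n = 2 * (n/2) := by omega
      rw [← this]; exact hn.1
    · intro ha
      exact ⟨2*a, by rw [Finset.mem_filter, hmemL]; exact ⟨ha, ⟨a, by ring⟩⟩, by omega⟩
  have hmemC : ∀ y, y ∈ C ↔ 2*y+1 ∉ S := by
    intro y
    rw [hCdef, Finset.mem_image]
    constructor
    · rintro ⟨n, hn, rfl⟩
      rw [Finset.mem_filter, hmemL] at hn
      have hodd := hn.2
      rw [Nat.not_even_iff] at hodd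
      have : n = 2 * (n/2) + 1 := by omega
      rw [← this]; exact hn.1
    · intro hy
      refine ⟨2*y+1, by rw [Finset.mem_filter, hmemL]
                        exact ⟨hy, by rw [Nat.not_even_iff]; omega⟩, by omega⟩
  -- injectivity of halving on evens / odds
  have hinjE : Set.InjOn (· / 2) ↑(L.filter (fun n => Even n)) := by
    intro x hx y hy hxy
    simp only [Finset.coe_filter, Set.mem_setOf_eq] at hx hy
    obtain ⟨a, ha⟩ := hx.2; obtain ⟨b, hb⟩ := hy.2
    simp only at hxy; omega
  have hinjO : Set.InjOn (· / 2) ↑(L.filter (fun n => ¬ Even n)) := by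
    intro x hx y hy hxy
    simp only [Finset.coe_filter, Set.mem_setOf_eq] at hx hy
    rw [Nat.not_even_iff] at hx hy
    have h1 := hx.2; have h2 := hy.2
    simp only at hxy; omega
  have hcardA : A.card = ρ := by
    rw [hAdef, Finset.card_image_of_injOn hinjE, ← hρ]
    unfold evenGaps
    have : {n : ℕ | n ∉ S ∧ Even n} = ↑(L.filter (fun n => Even n)) := by
      ext n; simp [hmemL]
    rw [this, Set.ncard_coe_finset]
  set u := C.card with hudef
  have hcardsplit : ρ + u = g := by
    rw [← hcardA, hudef, hAdef, hCdef, Finset.card_image_of_injOn hinjE,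
      Finset.card_image_of_injOn hinjO, ← hgL]
    exact Finset.card_filter_add_card_filter_not (p := fun n => Even n)
  -- sum of gaps
  have hsumL : (∑ n ∈ L, (n:ℤ)) = 2*(∑ a ∈ A, (a:ℤ)) + 2*(∑ y ∈ C, (y:ℤ)) + u := by
    rw [← Finset.sum_filter_add_sum_filter_not L (fun n => Even n) (fun n => (n:ℤ)),
      hAdef, hCdef, Finset.sum_image hinjE, Finset.sum_image hinjO,
      Finset.mul_sum, Finset.mul_sum]
    have hE : ∀ x ∈ L.filter (fun n => Even n), (x:ℤ) = 2*(((x/2 : ℕ)):ℤ) := by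
      intro x hx
      rw [Finset.mem_filter] at hx
      obtain ⟨k, hk⟩ := hx.2
      omega
    have hO : ∀ x ∈ L.filter (fun n => ¬ Even n), (x:ℤ) = 2*(((x/2 : ℕ)):ℤ) + 1 := by
      intro x hx
      rw [Finset.mem_filter, Nat.not_even_iff] at hx
      have := hx.2
      omega
    rw [Finset.sum_congr rfl hE, Finset.sum_congr rfl hO, Finset.sum_add_distrib,
      Finset.sum_const]
    have hcC : (L.filter (fun n => ¬ Even n)).card = u := by
      rw [hudef, hCdef, Finset.card_image_of_injOn hinjO]
    rw [hcC]
    push_cast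
    ring
  -- semigroup closure facts
  have hK1 : ∀ a ∈ A, ∀ x, x ≤ a → (x ∈ A ∨ a - x ∈ A) := by
    intro a ha x hx
    by_contra hcon
    push_neg at hcon
    obtain ⟨h1, h2⟩ := hcon
    rw [hmemA] at h1 h2 ha
    have hs1 : 2*x ∈ S := not_not.mp h1
    have hs2 : 2*(a-x) ∈ S := not_not.mp h2
    have hsum := hadd _ hs1 _ hs2
    have heq : 2*x + 2*(a-x) = 2*a := by omega
    rw [heq] at hsum
    exact ha hsum
  have hK2 : ∀ a ∈ A, ∀ x y, x + y + 1 = a → (x ∈ C ∨ y ∈ C) := by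
    intro a ha x y hxy
    by_contra hcon
    push_neg at hcon
    obtain ⟨h1, h2⟩ := hcon
    rw [hmemC] at h1 h2
    rw [hmemA] at ha
    have hs1 : 2*x+1 ∈ S := not_not.mp h1
    have hs2 : 2*y+1 ∈ S := not_not.mp h2
    have hsum := hadd _ hs1 _ hs2
    have heq : (2*x+1) + (2*y+1) = 2*a := by omega
    rw [heq] at hsum
    exact ha hsum
  have hK3 : ∀ z ∈ C, ∀ s, s ≤ z → s ∉ A → z - s ∈ C := by
    intro z hz s hsz hsA
    rw [hmemC] at hz ⊢
    rw [hmemA] at hsA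
    have hs : 2*s ∈ S := not_not.mp hsA
    intro hmem
    have hsum := hadd _ hs _ hmem
    have heq : 2*s + (2*(z-s)+1) = 2*z+1 := by omega
    rw [heq] at hsum
    exact hz hsum
  have h0C : (0:ℕ) ∈ C := by
    rw [hmemC]
    simpa using hone
  have hposA : ∀ a ∈ A, 1 ≤ a := by
    intro a ha
    rcases Nat.eq_zero_or_pos a with rfl | h1
    · rw [hmemA] at ha
      simp only [Nat.mul_zero] at ha
      exact absurd h0 ha
    · exact h1
  have hu1 : 1 ≤ u := by
    rw [hudef]
    exact Finset.card_pos.mpr ⟨0, h0C⟩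
  have hu_le : u + 1 ≤ ρ := by omega
  -- t := mex C
  have hex : ∃ n, n ∉ C := by
    refine ⟨C.sup id + 1, fun hc => ?_⟩
    have := Finset.le_sup (f := id) hc
    simp only [id_eq] at this
    omega
  obtain ⟨t, htC, hltC⟩ : ∃ t, t ∉ C ∧ ∀ x, x < t → x ∈ C :=
    ⟨Nat.find hex, Nat.find_spec hex, fun x hx => by
      by_contra hxc
      exact Nat.find_min hex hx hxc⟩
  have ht1 : 1 ≤ t := by
    rcases Nat.eq_zero_or_pos t with rfl | h1
    · exact absurd h0C htC
    · exact h1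
  -- D
  set D := C.filter (fun z => ¬ z < t) with hDdef
  have hrange : C.filter (fun z => z < t) = Finset.range t := by
    ext x
    simp only [Finset.mem_filter, Finset.mem_range]
    exact ⟨fun hx => hx.2, fun hx => ⟨hltC x hx, hx⟩⟩
  have htu : t + D.card = u := by
    have hsplit := Finset.card_filter_add_card_filter_not
      (s := C) (p := fun z => z < t)
    rw [hrange, Finset.card_range] at hsplit
    rw [hudef, ← hsplit, hDdef]
  have hDelem : ∀ z ∈ D, t + 1 ≤ z := by
    intro z hz
    rw [hDdef, Finset.mem_filter] at hz
    have hne : z ≠ t := fun e => htC (e ▸ hz.1)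
    omega
  have hsumC : 2*(∑ y ∈ C, (y:ℤ)) = t*((t:ℤ)-1) + ∑ z ∈ D, 2*(z:ℤ) := by
    rw [← Finset.sum_filter_add_sum_filter_not C (fun z => z < t) (fun y => (y:ℤ)), hrange]
    have hgauss : 2*(∑ x ∈ Finset.range t, (x:ℤ)) = t*((t:ℤ)-1) := by
      have hn := Finset.sum_range_id_mul_two t
      zify [ht1] at hn
      push_cast at hn
      linarith
    rw [mul_add, hgauss, Finset.mul_sum, hDdef]
  -- Alow / Ahigh
  set Alow := A.filter (fun a => a ≤ 2*t) with hAlowdef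
  set Ahigh := A.filter (fun a => ¬ a ≤ 2*t) with hAhighdef
  set p := Alow.card with hpdef
  set q := Ahigh.card with hqdef
  have hpq : p + q = ρ := by
    rw [hpdef, hqdef, hAlowdef, hAhighdef, ← hcardA]
    exact Finset.card_filter_add_card_filter_not (p := fun a => a ≤ 2*t)
  have hAhigh_ge : ∀ a ∈ Ahigh, 2*t+2 ≤ a := by
    intro a ha
    rw [hAhighdef, Finset.mem_filter] at ha
    have h2 : a ≠ 2*t+1 := by
      intro he
      rcases hK2 a ha.1 t t (by omega) with hc | hc <;> exact htC hc
    omega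
  have hAhighA : ∀ a ∈ Ahigh, a ∈ A := by
    intro a ha
    rw [hAhighdef, Finset.mem_filter] at ha
    exact ha.1
  set W := Ahigh.image (fun a => a - (t+1)) with hWdef
  have hinjW : Set.InjOn (fun a => a - (t+1)) ↑Ahigh := by
    intro x hx y hy hxy
    simp only [Finset.mem_coe] at hx hy
    have hx' := hAhigh_ge x hx
    have hy' := hAhigh_ge y hy
    simp only at hxy
    omega
  have hcardW : W.card = q := by
    rw [hWdef, Finset.card_image_of_injOn hinjW, hqdef]
  have hWD : W ⊆ D := by
    intro z hz
    rw [hWdef, Finset.mem_image] at hz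
    obtain ⟨a, ha, rfl⟩ := hz
    have hage := hAhigh_ge a ha
    have hzC : a - (t+1) ∈ C := by
      rcases hK2 a (hAhighA a ha) t (a - (t+1)) (by omega) with hc | hc
      · exact absurd hc htC
      · exact hc
    rw [hDdef, Finset.mem_filter]
    exact ⟨hzC, by omega⟩
  have hsumW : ∑ z ∈ W, (2*(z:ℤ) + 2*(t:ℤ) + 2) = ∑ a ∈ Ahigh, 2*(a:ℤ) := by
    rw [hWdef, Finset.sum_image hinjW]
    apply Finset.sum_congr rfl
    intro a ha
    have := hAhigh_ge a ha
    omega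
  -- condition (a)
  have hconda : ∀ z ∈ D, (z:ℤ) ≤ t + ((D.filter (· ≤ z)).card : ℤ) - 1 + ρ := by
    intro z hz
    have hzC : z ∈ C := by
      rw [hDdef, Finset.mem_filter] at hz
      exact hz.1
    have hcnt := count_CA A C z (hK3 z hzC)
    have hAle : (A.filter (· ≤ z)).card ≤ ρ := by
      rw [← hcardA]
      exact Finset.card_le_card (Finset.filter_subset _ _)
    have hzt := hDelem z hz
    have hCsplit : (C.filter (· ≤ z)).card = t + (D.filter (· ≤ z)).card := by
      have hsplit := Finset.card_filter_add_card_filter_not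
        (s := C.filter (· ≤ z)) (p := fun x => x < t)
      have he1 : (C.filter (· ≤ z)).filter (fun x => x < t) = Finset.range t := by
        ext x
        simp only [Finset.mem_filter, Finset.mem_range]
        exact ⟨fun hx => hx.2, fun hx => ⟨⟨hltC x hx, by omega⟩, hx⟩⟩
      have he2 : (C.filter (· ≤ z)).filter (fun x => ¬ x < t) = D.filter (· ≤ z) := by
        rw [hDdef, Finset.filter_filter, Finset.filter_filter]
        apply Finset.filter_congr
        intro x _
        tauto
      rw [he1, he2, Finset.card_range] at hsplit
      omega
    rw [hCsplit] at hcnt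
    omega
  -- condition (b)
  have hcondb : ∀ z ∈ W, (z:ℤ) ≤ t + 2*((D.filter (· ≤ z)).card : ℤ) - 1 := by
    intro z hz
    rw [hWdef, Finset.mem_image] at hz
    obtain ⟨a, ha, rfl⟩ := hz
    have hage := hAhigh_ge a ha
    have haA := hAhighA a ha
    have hpair : ∀ x, t ≤ x → 2*x ≤ a-1 →
        (x ∈ D.filter (· ≤ a - (t+1)) ∨ ((a-1) - x) ∈ D.filter (· ≤ a - (t+1))) := by
      intro x htx h2x
      rcases hK2 a haA x ((a-1) - x) (by omega) with hc | hc
      · left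
        have hxt : x ≠ t := fun e => htC (e ▸ hc)
        rw [Finset.mem_filter, hDdef, Finset.mem_filter]
        exact ⟨⟨hc, by omega⟩, by omega⟩
      · right
        have hyt : (a-1) - x ≠ t := fun e => htC (e ▸ hc)
        rw [Finset.mem_filter, hDdef, Finset.mem_filter]
        exact ⟨⟨hc, by omega⟩, by omega⟩
    have hpc := pair_count (D.filter (· ≤ a - (t+1))) t (a-1) hpair
    have hXfilt : (D.filter (· ≤ a - (t+1))).filter (· ≤ a-1)
        = D.filter (· ≤ a - (t+1)) := by
      apply Finset.filter_true_of_mem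
      intro x hx
      rw [Finset.mem_filter] at hx
      omega
    rw [hXfilt] at hpc
    omega
  -- apply sumDW
  have hDW := sumDW D.card D W t ρ rfl hWD hconda hcondb
  rw [hcardW] at hDW
  -- apply sumA_le
  have hAlowsub : ∀ a ∈ Alow, a ∈ A ∧ a ≤ 2*t := by
    intro a ha
    rw [hAlowdef, Finset.mem_filter] at ha
    exact ha
  have hsumAlow : ∑ a ∈ Alow, a ≤ fbd p (2*t) := by
    apply sumA_le p Alow (2*t) rfl
    · intro a ha; exact hposA a (hAlowsub a ha).1
    · intro a ha; exact (hAlowsub a ha).2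
    · intro a ha x hx
      rcases hK1 a (hAlowsub a ha).1 x hx with hc | hc
      · left
        rw [hAlowdef, Finset.mem_filter]
        exact ⟨hc, by have := (hAlowsub a ha).2; omega⟩
      · right
        rw [hAlowdef, Finset.mem_filter]
        exact ⟨hc, by have := (hAlowsub a ha).2; omega⟩
  have hp2t : p ≤ 2*t := by
    rw [hpdef]
    calc Alow.card ≤ (Finset.Icc 1 (2*t)).card := by
          apply Finset.card_le_card
          intro a ha
          rw [Finset.mem_Icc]
          exact ⟨hposA a (hAlowsub a ha).1, (hAlowsub a ha).2⟩
      _ = 2*t := by rw [Nat.card_Icc]; omega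
  have hqD : q ≤ D.card := by
    rw [← hcardW]
    exact Finset.card_le_card hWD
  have hpt1 : t + 1 ≤ p := by omega
  have hfb := fbd_bound p (2*t) hp2t (by omega)
  -- combine sums
  have hsumA : (∑ a ∈ A, (a:ℤ)) = (∑ a ∈ Alow, (a:ℤ)) + (∑ a ∈ Ahigh, (a:ℤ)) := by
    rw [hAlowdef, hAhighdef]
    exact (Finset.sum_filter_add_sum_filter_not A (fun a => a ≤ 2*t) (fun a => (a:ℤ))).symm
  have hAlowZ : (∑ a ∈ Alow, (a:ℤ)) ≤ (fbd p (2*t) : ℤ) := by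
    have : ((∑ a ∈ Alow, a : ℕ) : ℤ) ≤ (fbd p (2*t) : ℤ) := by exact_mod_cast hsumAlow
    rw [Nat.cast_sum] at this
    exact this
  -- master chain
  have hchain : 2*(∑ a ∈ A, (a:ℤ)) + 2*(∑ y ∈ C, (y:ℤ))
      ≤ 2*(fbd p (2*t) : ℤ) + t*((t:ℤ)-1) + RHSpoly t ρ D.card q := by
    rw [hsumA, hsumC]
    have h1 : (∑ z ∈ D, 2*(z:ℤ)) + (∑ z ∈ W, (2*(z:ℤ) + 2*(t:ℤ) + 2))
        ≤ RHSpoly t ρ D.card q := hDW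
    rw [hsumW] at h1
    have h2 : ∑ a ∈ Ahigh, 2*(a:ℤ) = 2*(∑ a ∈ Ahigh, (a:ℤ)) := by
      rw [Finset.mul_sum]
    rw [h2] at h1
    linarith
  -- final algebra for the master bound
  have halgebra : 2*(fbd p (2*t) : ℤ) + t*((t:ℤ)-1) + RHSpoly t ρ D.card q
      ≤ (u:ℤ)^2 + 4*ρ*u - ρ^2 - 5*u + 3*ρ := by
    have := final_alg t D.card p q u ρ (fbd p (2*t)) hpt1 hp2t hqD htu hpq hu_le
      (by exact_mod_cast hfb)
    exact this
  have hmaster : 2*(∑ a ∈ A, (a:ℤ)) + 2*(∑ y ∈ C, (y:ℤ))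
      ≤ (u:ℤ)^2 + 4*ρ*u - ρ^2 - 5*u + 3*ρ := le_trans hchain halgebra
  -- weight translation
  have hpfin : (setOf fun n => n ∉ S).Finite := hfin
  have htofin : hpfin.toFinset = L := by
    ext n
    simp only [Set.Finite.mem_toFinset, Set.mem_setOf_eq]
    exact (hmemL n).symm
  have hcardfin : hpfin.toFinset.card = g := by rw [htofin, hgL]
  have hnth_mem : ∀ j, j < g → Nat.nth (fun n => n ∉ S) j ∈ L := by
    intro j hj
    have := Nat.nth_mem_of_lt_card hpfin (lt_of_lt_of_eq hj hcardfin.symm)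
    rw [hmemL]
    exact this
  have hnth_mono : ∀ i j, i < j → j < g → Nat.nth (fun n => n ∉ S) i < Nat.nth (fun n => n ∉ S) j := by
    intro i j hij hj
    exact Nat.nth_lt_nth_of_lt_card hpfin hij (lt_of_lt_of_eq hj hcardfin.symm)
  have hlb : ∀ j, j < g → j + 1 ≤ Nat.nth (fun n => n ∉ S) j := by
    intro j
    induction j with
    | zero =>
      intro hj
      have hmem := hnth_mem 0 hj
      rw [hmemL] at hmem
      rcases Nat.eq_zero_or_pos (Nat.nth (fun n => n ∉ S) 0) with he | h1
      · rw [he] at hmem; exact absurd h0 hmem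
      · omega
    | succ k ih =>
      intro hj
      have h1 := ih (by omega)
      have h2 := hnth_mono k (k+1) (by omega) hj
      omega
  have himage : (Finset.range g).image (Nat.nth (fun n => n ∉ S)) = L := by
    apply Finset.eq_of_subset_of_card_le
    · intro x hx
      rw [Finset.mem_image] at hx
      obtain ⟨j, hj, rfl⟩ := hx
      exact hnth_mem j (Finset.mem_range.mp hj)
    · rw [hgL, Finset.card_image_of_injOn]
      · rw [Finset.card_range]
      · intro x hx y hy hxy
        simp only [Finset.coe_range, Set.mem_Iio] at hx hy
        by_contra hne
        rcases Nat.lt_or_ge x y with hlt | hge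
        · exact absurd hxy (Nat.ne_of_lt (hnth_mono x y hlt hy))
        · have : y < x := by omega
          exact absurd hxy.symm (Nat.ne_of_lt (hnth_mono y x this hx))
  have hsum_nth : ∑ j ∈ Finset.range g, (Nat.nth (fun n => n ∉ S) j : ℤ)
      = ∑ n ∈ L, (n:ℤ) := by
    rw [← himage, Finset.sum_image]
    intro x hx y hy hxy
    rw [Finset.mem_coe, Finset.mem_range] at hx hy
    by_contra hne
    rcases Nat.lt_or_ge x y with hlt | hge
    · exact absurd hxy (Nat.ne_of_lt (hnth_mono x y hlt hy))
    · have : y < x := by omega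
      exact absurd hxy.symm (Nat.ne_of_lt (hnth_mono y x this hx))
  have hweight : (weight S : ℤ) = (∑ n ∈ L, (n:ℤ)) - ∑ j ∈ Finset.range g, ((j:ℤ)+1) := by
    unfold weight
    rw [hg]
    have hIcc : Finset.Icc 1 g = (Finset.range g).image (· + 1) := by
      ext i
      simp only [Finset.mem_Icc, Finset.mem_image, Finset.mem_range]
      constructor
      · intro hi; exact ⟨i-1, by omega, by omega⟩
      · rintro ⟨j, hj, rfl⟩; omega
    have hinj1 : Set.InjOn (· + 1) ↑(Finset.range g) := by
      intro x _ y _ hxy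
      simpa using hxy
    rw [hIcc, Finset.sum_image hinj1]
    have hterm : ∀ i ∈ Finset.range g,
        ((gapNth S (i+1) - (i+1) : ℕ) : ℤ) = (Nat.nth (fun n => n ∉ S) i : ℤ) - ((i:ℤ)+1) := by
      intro i hi
      rw [Finset.mem_range] at hi
      unfold gapNth
      have h1 : i+1-1 = i := by omega
      rw [h1]
      have h2 := hlb i hi
      omega
    rw [Nat.cast_sum, Finset.sum_congr rfl hterm, Finset.sum_sub_distrib, hsum_nth]
  have hgauss2 : 2*(∑ j ∈ Finset.range g, ((j:ℤ)+1)) = g*((g:ℤ)+1) := by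
    have hn := Finset.sum_range_id_mul_two (g+1)
    have hn2 : ∑ i ∈ Finset.range (g+1), i = (∑ i ∈ Finset.range g, (i+1)) + 0 :=
      Finset.sum_range_succ' (fun i => i) g
    rw [hn2] at hn
    have : ((((∑ i ∈ Finset.range g, (i+1)) + 0) * 2 : ℕ) : ℤ) = (((g+1)*(g+1-1) : ℕ) : ℤ) := by
      exact_mod_cast congrArg (fun n : ℕ => (n:ℤ)) hn
    push_cast at this
    linarith
  -- the binomial coefficient
  have hchoose : 2*(((g + 2*ρ).choose 2 : ℕ) : ℤ) = ((g:ℤ)+2*ρ)*((g:ℤ)+2*ρ-1) := by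
    have hk1 : 1 ≤ g + 2*ρ := by omega
    have hc := Nat.choose_two_right (g + 2*ρ)
    have heven : Even ((g + 2*ρ) * (g + 2*ρ - 1)) := by
      rcases Nat.even_or_odd (g + 2*ρ) with he | ho
      · exact he.mul_right _
      · have : Even (g + 2*ρ - 1) := by
          rw [Nat.odd_iff] at ho
          rw [Nat.even_iff]
          omega
        exact this.mul_left _
    have h2 : 2 * ((g + 2*ρ) * (g + 2*ρ - 1) / 2) = (g + 2*ρ) * (g + 2*ρ - 1) :=
      Nat.two_mul_div_two_of_even heven
    have h3 : 2 * ((g + 2*ρ).choose 2) = (g + 2*ρ) * (g + 2*ρ - 1) := by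
      rw [hc]; exact h2
    zify [hk1] at h3
    push_cast at h3
    linarith
  -- final combination
  have hgZ : (g:ℤ) = ρ + u := by exact_mod_cast congrArg (fun n : ℕ => (n:ℤ)) hcardsplit.symm
  have h2w : 2*(weight S : ℤ) ≤ 2*(((g + 2*ρ).choose 2 : ℕ) : ℤ) - 8*g - 12*ρ^2 + 16*ρ := by
    rw [hweight, hchoose, hsumL]
    exact fincomb (∑ a ∈ A, (a:ℤ)) (∑ y ∈ C, (y:ℤ)) (∑ j ∈ Finset.range g, ((j:ℤ)+1))
      u ρ g hmaster hgauss2 hgZ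
  have hgoal : (weight S : ℤ) ≤ (((g + 2*ρ).choose 2 : ℕ) : ℤ) - 4*g - 6*ρ^2 + 8*ρ := by
    linarith
  calc (weight S : ℤ) ≤ (((g + 2*ρ).choose 2 : ℕ) : ℤ) - 4*g - 6*ρ^2 + 8*ρ := hgoal
    _ = ((g + 2 * ρ).choose 2 : ℤ) - 4 * g - 6 * ρ ^ 2 + 8 * ρ := by norm_num
end
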